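/- arXiv:1208.5298 — 8 statements merged into one kernel-verified Lean document; each statement's English description precedes it below -/
import Mathlib

section
/- Let R ⊆ T be commutative rings. Suppose T has a maximal subring V (a proper subring maximal among proper subrings of T) such that V is integrally closed in T and some unit of R does not lie in V. Then R has a maximal subring. -/
/-!
Let `x ∈ R` be a unit with inverse `y` and `x ∉ V`. If `y ∉ V`, maximality of `V` gives
`V[y] = T`, so `x ∈ V[x⁻¹]`; multiplying `x = p(y)` by `x ^ deg p` shows `x` is integral over
`V`, contradicting integral closedness. Hence `y ∈ V` and `V[x] = T`, and every `r = p(x)`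
equals `v * x ^ n` with `v = r * y ^ n ∈ V`. So `R` is generated by `V ∩ R` together with
`x ∉ V ∩ R`, and a subring of `R` maximal among those containing `V ∩ R` and missing `x`
(Zorn) is a maximal subring.
-/

/-- A ring is submaximal if it has a maximal subring. -/
def Submaximal (R : Type*) [CommRing R] : Prop :=
  ∃ S : Subring R, S ≠ ⊤ ∧ ∀ T : Subring R, S < T → T = ⊤

open Polynomial

section Reverse

variable {R A : Type*} [CommRing R] [CommRing A] [Algebra R A] {x y : A}

theorem aeval_reverse_mul_pow_of_mul_eq_one (hxy : x * y = 1) (p : R[X]) :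
    aeval y p.reverse * x ^ p.natDegree = aeval x p := by
  let := invertibleOfRightInverse _ _ hxy
  exact eval₂_reverse_mul_pow _ x p

theorem isIntegral_of_mem_adjoin_of_mul_eq_one (hxy : x * y = 1)
    (hx : x ∈ Algebra.adjoin R {y}) : IsIntegral R x := by
  obtain ⟨p, hp⟩ := Algebra.adjoin_singleton_eq_range_aeval R y ▸ hx
  have hrev : aeval x p.reverse * y ^ p.natDegree = x :=
    (aeval_reverse_mul_pow_of_mul_eq_one (mul_comm y x ▸ hxy) p).trans hp
  refine ⟨X ^ (p.natDegree + 1) - p.reverse, monic_X_pow_sub ?_, ?_⟩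
  · calc p.reverse.degree ≤ p.reverse.natDegree := degree_le_natDegree
      _ ≤ p.natDegree := by exact_mod_cast p.reverse_natDegree_le
      _ < ↑(p.natDegree + 1) := by exact_mod_cast p.natDegree.lt_succ_self
  · rw [← aeval_def, map_sub, map_pow, aeval_X, sub_eq_zero]
    have hxyn : (x * y) ^ p.natDegree = 1 := by rw [hxy, one_pow]
    linear_combination (-x ^ p.natDegree) * hrev + aeval x p.reverse * hxyn

theorem exists_mul_pow_mem_adjoin_of_mul_eq_one (hxy : x * y = 1) {r : A}
    (hr : r ∈ Algebra.adjoin R {x}) : ∃ n : ℕ, r * y ^ n ∈ Algebra.adjoin R {y} := by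
  obtain ⟨p, rfl⟩ := Algebra.adjoin_singleton_eq_range_aeval R x ▸ hr
  refine ⟨p.natDegree, ?_⟩
  rw [AlgHom.toRingHom_eq_coe, RingHom.coe_coe, ← aeval_reverse_mul_pow_of_mul_eq_one hxy,
    mul_assoc, ← mul_pow, hxy, one_pow, mul_one]
  exact Algebra.adjoin_singleton_eq_range_aeval R y ▸ ⟨p.reverse, rfl⟩

end Reverse

namespace Subring

variable {T : Type*} [CommRing T]

theorem exists_monic_coeff_mem_of_isIntegral {V : Subring T} {x : T} (hx : IsIntegral V x) :
    ∃ p : T[X], p.Monic ∧ (∀ i, p.coeff i ∈ V) ∧ p.eval x = 0 := by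
  obtain ⟨p, hmonic, hroot⟩ := hx
  exact ⟨p.map V.subtype, hmonic.map _, fun i => by simp, by rwa [eval_map]⟩

theorem adjoin_singleton_eq_top_of_isCoatom {V : Subring T} (hV : IsCoatom V) {t : T}
    (ht : t ∉ V) : Algebra.adjoin V {t} = ⊤ := by
  rw [← Algebra.toSubring_eq_top]
  refine hV.2 _ (SetLike.lt_iff_le_and_exists.mpr ⟨fun v hv => ?_, t, ?_, ht⟩)
  · exact Subalgebra.algebraMap_mem _ (⟨v, hv⟩ : V)
  · exact Algebra.self_mem_adjoin_singleton V t

theorem mem_of_mem_adjoin_singleton {V : Subring T} {y r : T} (hy : y ∈ V)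
    (hr : r ∈ Algebra.adjoin V {y}) : r ∈ V := by
  have hy_bot : y ∈ (⊥ : Subalgebra V T) := Subalgebra.algebraMap_mem _ (⟨y, hy⟩ : V)
  obtain ⟨v, rfl⟩ := Algebra.mem_bot.mp (Algebra.adjoin_singleton_le hy_bot hr)
  exact v.2

theorem closure_insert_comap_eq_top {R V : Subring T} {x y : T} (hxR : x ∈ R) (hyR : y ∈ R)
    (hxy : x * y = 1) (hyV : y ∈ V) (hx : Algebra.adjoin V {x} = ⊤) :
    closure (insert ⟨x, hxR⟩ (V.comap R.subtype : Set R)) = ⊤ := by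
  refine eq_top_iff.mpr fun r _ => ?_
  obtain ⟨n, hn⟩ :=
    exists_mul_pow_mem_adjoin_of_mul_eq_one hxy (hx ▸ Algebra.mem_top (x := (r : T)))
  have hv : (⟨r * y ^ n, R.mul_mem r.2 (R.pow_mem hyR n)⟩ : R) ∈ V.comap R.subtype :=
    show (r : T) * y ^ n ∈ V from mem_of_mem_adjoin_singleton hyV hn
  have hr : r = ⟨r * y ^ n, R.mul_mem r.2 (R.pow_mem hyR n)⟩ * ⟨x, hxR⟩ ^ n := by
    ext
    simp only [coe_mul, coe_pow, mul_assoc, ← mul_pow, mul_comm y x, hxy, one_pow, mul_one]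
  rw [hr]
  exact mul_mem (subset_closure (Set.mem_insert_of_mem _ hv))
    (pow_mem (subset_closure (Set.mem_insert _ _)) n)

theorem exists_le_isCoatom_of_closure_insert_eq_top {R : Type*} [Ring R] {S : Subring R} {x : R}
    (hx : x ∉ S) (h : closure (insert x (S : Set R)) = ⊤) : ∃ M, S ≤ M ∧ IsCoatom M := by
  obtain ⟨M, hSM, hM⟩ := zorn_le_nonempty₀ {M : Subring R | x ∉ M}
    (fun c hc hchain N hN => ⟨sSup c, fun hmem => by
      obtain ⟨M, hMc, hxM⟩ := (mem_sSup_of_directedOn ⟨N, hN⟩ hchain.directedOn).mp hmem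
      exact hc hMc hxM, fun _ => le_sSup⟩) S hx
  refine ⟨M, hSM, fun hMtop => hM.1 (hMtop ▸ mem_top x), fun N hMN => ?_⟩
  have hxN : x ∈ N := by_contra fun hxN => hMN.not_ge (hM.2 hxN hMN.le)
  rw [eq_top_iff, ← h, closure_le]
  exact Set.insert_subset hxN (hSM.trans hMN.le)

end Subring

theorem stmt0_general {T : Type*} [CommRing T] (R V : Subring T)
    (hVmax : V ≠ ⊤ ∧ ∀ W : Subring T, V < W → W = ⊤)
    (hVic : ∀ x : T, (∃ p : Polynomial T, p.Monic ∧ (∀ i, p.coeff i ∈ V) ∧ p.eval x = 0) → x ∈ V)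
    (hunit : ∃ x : T, x ∈ R ∧ (∃ y ∈ R, x * y = 1) ∧ x ∉ V) :
    Submaximal R := by
  obtain ⟨x, hxR, ⟨y, hyR, hxy⟩, hxV⟩ := hunit
  have hV : IsCoatom V := hVmax
  have hyV : y ∈ V := by
    by_contra hyV
    refine hxV (hVic x (Subring.exists_monic_coeff_mem_of_isIntegral
      (isIntegral_of_mem_adjoin_of_mul_eq_one hxy ?_)))
    exact Subring.adjoin_singleton_eq_top_of_isCoatom hV hyV ▸ Algebra.mem_top
  have hR : Subring.closure (insert ⟨x, hxR⟩ (V.comap R.subtype : Set R)) = ⊤ :=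
    Subring.closure_insert_comap_eq_top hxR hyR hxy hyV
      (Subring.adjoin_singleton_eq_top_of_isCoatom hV hxV)
  obtain ⟨M, -, hM⟩ :=
    Subring.exists_le_isCoatom_of_closure_insert_eq_top (S := V.comap R.subtype) hxV hR
  exact ⟨M, hM⟩

theorem stmt0 {T : Type*} [CommRing T] [Nontrivial T] (R V : Subring T)
    (hVmax : V ≠ ⊤ ∧ ∀ W : Subring T, V < W → W = ⊤)
    (hVic : ∀ x : T, (∃ p : Polynomial T, p.Monic ∧ (∀ i, p.coeff i ∈ V) ∧ p.eval x = 0) → x ∈ V)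
    (hunit : ∃ x : T, x ∈ R ∧ (∃ y ∈ R, x * y = 1) ∧ x ∉ V) :
    Submaximal R :=
  stmt0_general R V hVmax hVic hunit
end

section
/- A commutative ring R is submaximal if and only if there exist a proper subring S of R and an element x ∈ R \ S such that S[x] = R. -/
namespace Subring

variable {R : Type*} [Ring R]

theorem closure_union_singleton_eq_top_of_maximal {S : Subring R}
    (hmax : ∀ T : Subring R, S < T → T = ⊤) {x : R} (hx : x ∉ S) :
    closure (↑S ∪ {x}) = ⊤ := by
  refine hmax _ (lt_of_le_of_ne (fun y hy => subset_closure (Or.inl hy)) fun h => hx ?_)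
  exact h ▸ subset_closure (Or.inr rfl)

theorem eq_top_of_le_of_mem_of_closure_eq_top {S T : Subring R} {x : R}
    (hgen : closure (↑S ∪ {x}) = ⊤) (hST : S ≤ T) (hxT : x ∈ T) : T = ⊤ := by
  refine top_le_iff.1 (hgen ▸ (closure_le.2 ?_))
  rintro y (hy | rfl)
  exacts [hST hy, hxT]

/-- Zorn's lemma applies because membership of `x` in the union of a chain of subrings is
witnessed by a single member of the chain. -/
theorem exists_le_maximal_notMem {S : Subring R} {x : R} (hx : x ∉ S) :
    ∃ M : Subring R, S ≤ M ∧ x ∉ M ∧ ∀ T : Subring R, M < T → x ∈ T := by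
  have hchain : ∀ c ⊆ {T : Subring R | S ≤ T ∧ x ∉ T}, IsChain (· ≤ ·) c → ∀ T₀ ∈ c,
      ∃ ub ∈ {T : Subring R | S ≤ T ∧ x ∉ T}, ∀ T ∈ c, T ≤ ub := by
    intro c hc hc_chain T₀ hT₀
    refine ⟨sSup c, ⟨(hc hT₀).1.trans (le_sSup hT₀), fun hxc => ?_⟩, fun T hT => le_sSup hT⟩
    obtain ⟨T, hT, hxT⟩ := (mem_sSup_of_directedOn ⟨T₀, hT₀⟩ hc_chain.directedOn).1 hxc
    exact (hc hT).2 hxT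
  obtain ⟨M, hSM, ⟨-, hxM⟩, hMmax⟩ := zorn_le_nonempty₀ _ hchain S ⟨le_rfl, hx⟩
  refine ⟨M, hSM, hxM, fun T hMT => ?_⟩
  by_contra hxT
  exact hMT.not_ge (hMmax ⟨hSM.trans hMT.le, hxT⟩ hMT.le)

end Subring

open Subring in
theorem stmt1_general {R : Type*} [CommRing R] :
    Submaximal R ↔
      ∃ S : Subring R, S ≠ ⊤ ∧ ∃ x : R, x ∉ S ∧ Subring.closure (↑S ∪ {x}) = ⊤ := by
  constructor
  · rintro ⟨S, hS, hmax⟩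
    obtain ⟨x, hx⟩ := SetLike.exists_not_mem_of_ne_top S hS
    exact ⟨S, hS, x, hx, closure_union_singleton_eq_top_of_maximal hmax hx⟩
  · rintro ⟨S, -, x, hx, hgen⟩
    obtain ⟨M, hSM, hxM, hMmax⟩ := exists_le_maximal_notMem hx
    refine ⟨M, fun hM => hxM (hM ▸ mem_top x), fun T hMT => ?_⟩
    exact eq_top_of_le_of_mem_of_closure_eq_top hgen (hSM.trans hMT.le) (hMmax T hMT)

theorem stmt1 {R : Type*} [CommRing R] [Nontrivial R] :
    Submaximal R ↔
      ∃ S : Subring R, S ≠ ⊤ ∧ ∃ x : R, x ∉ S ∧ Subring.closure (↑S ∪ {x}) = ⊤ :=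
  stmt1_general
end

section
/- Let R be a commutative ring of characteristic zero. If there exists a natural number n > 1 such that n is invertible in R, then R has a maximal subring. -/
theorem submaximal_of_forall_pow_mul_mem {R : Type*} [CommRing R] {a x : R} (hxa : x * a = 1)
    {A : Subring R} (hxA : x ∉ A) (habs : ∀ r : R, ∃ k : ℕ, a ^ k * r ∈ A) : Submaximal R := by
  obtain ⟨V, hAV, hV⟩ := zorn_le_nonempty₀ {V : Subring R | x ∉ V}
    (fun c hc hchain V hV => ⟨sSup c, fun hx => by
      obtain ⟨W, hWc, hxW⟩ := (Subring.mem_sSup_of_directedOn ⟨V, hV⟩ hchain.directedOn).1 hx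
      exact hc hWc hxW, fun _ => le_sSup⟩) A hxA
  refine ⟨V, fun h => hV.1 (h ▸ Subring.mem_top x), fun T hVT => eq_top_iff.2 fun r _ => ?_⟩
  have hxT : x ∈ T := by_contra fun hxT => hVT.not_ge (hV.2 hxT hVT.le)
  obtain ⟨k, hk⟩ := habs r
  have hr : r = x ^ k * (a ^ k * r) := by rw [← mul_assoc, ← mul_pow, hxa, one_pow, one_mul]
  rw [hr]
  exact mul_mem (pow_mem hxT k) (hVT.le (hAV hk))

theorem Subring.mem_of_isIntegral_of_mul_eq_one {S : Type*} [CommRing S] {O : Subring S}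
    {a x : S} (ha : a ∈ O) (hxa : x * a = 1) (hx : IsIntegral O x) : x ∈ O := by
  nontriviality S
  obtain ⟨f, hmon, hfx⟩ := hx
  rw [← Polynomial.aeval_def] at hfx
  obtain ⟨k, hk⟩ : ∃ k, f.natDegree = k + 1 := Nat.exists_eq_succ_of_ne_zero fun h => by
    simp [hmon.natDegree_eq_zero.1 h] at hfx
  have hpow : ∀ i ≤ k, x ^ i * a ^ k = a ^ (k - i) := fun i hi => by
    obtain ⟨j, rfl⟩ := Nat.exists_eq_add_of_le hi
    rw [pow_add, ← mul_assoc, ← mul_pow, hxa, one_pow, one_mul, Nat.add_sub_cancel_left]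
  rw [hmon.as_sum, hk] at hfx
  simp only [map_add, map_pow, Polynomial.aeval_X, map_sum, map_mul, Polynomial.aeval_C] at hfx
  -- multiplying the monic relation by `a ^ k` turns `x ^ (k + 1)` into `x`, the rest into `O`
  have hx : x + ∑ i ∈ Finset.range (k + 1), algebraMap O S (f.coeff i) * a ^ (k - i) = 0 := by
    rw [← zero_mul (a ^ k), ← hfx, add_mul, Finset.sum_mul, pow_succ', mul_assoc, ← mul_pow, hxa,
      one_pow, mul_one]
    refine congrArg _ (Finset.sum_congr rfl fun i hi => ?_)
    rw [mul_assoc, hpow i (Nat.lt_succ_iff.1 (Finset.mem_range.1 hi))]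
  rw [eq_neg_of_add_eq_zero_left hx]
  exact neg_mem (sum_mem fun i _ => mul_mem (f.coeff i).2 (pow_mem ha _))

theorem IsAlgebraic.of_subring_le {S : Type*} [CommRing S] {A B : Subring S} (hle : A ≤ B)
    {x : S} (hx : IsAlgebraic A x) : IsAlgebraic B x := by
  let : Algebra A B := (Subring.inclusion hle).toAlgebra
  have : IsScalarTower A B S := .of_algebraMap_eq fun _ ↦ rfl
  exact hx.extendScalars (Subring.inclusion_injective hle)

theorem exists_subring_inv_notMem_of_isAlgebraic {F : Type*} [Field F] {O : Subring F} {a : F}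
    (ha : a ∈ O) (ha' : a⁻¹ ∉ O) (hinv : ∀ c ∈ O, c ≠ 0 → ∃ k : ℕ, a ^ k * c⁻¹ ∈ O)
    (halg : ∀ z : F, IsAlgebraic O z) :
    ∃ A : Subring F, a⁻¹ ∉ A ∧ ∀ z : F, ∃ k : ℕ, a ^ k * z ∈ A := by
  have ha0 : a ≠ 0 := by rintro rfl; exact ha' (by simp [O.zero_mem])
  refine ⟨(integralClosure O F).toSubring, fun h => ha' ?_, fun z => ?_⟩
  · exact Subring.mem_of_isIntegral_of_mul_eq_one ha (inv_mul_cancel₀ ha0) h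
  · obtain ⟨c, hc0, hcz⟩ := (halg z).exists_integral_multiple
    have hc0' : (c : F) ≠ 0 := by simpa using hc0
    obtain ⟨k, hk⟩ := hinv c c.2 hc0'
    refine ⟨k, ?_⟩
    have hz : a ^ k * z = a ^ k * (c : F)⁻¹ * (c • z) := by
      rw [Subring.smul_def, smul_eq_mul, mul_assoc, inv_mul_cancel_left₀ hc0']
    rw [hz]
    exact mul_mem (isIntegral_algebraMap (x := (⟨_, hk⟩ : O))) hcz

def RingHom.rangeLocalizationAtPrime {D F : Type*} [CommRing D] [CommRing F] (φ : D →+* F)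
    {π : D} (hπ : Prime π) : Subring F where
  carrier := {z | ∃ a b, ¬π ∣ b ∧ z * φ b = φ a}
  mul_mem' := by
    rintro _ _ ⟨a₁, b₁, hb₁, h₁⟩ ⟨a₂, b₂, hb₂, h₂⟩
    exact ⟨a₁ * a₂, b₁ * b₂, fun h => (hπ.dvd_or_dvd h).elim hb₁ hb₂, by
      rw [map_mul, map_mul, ← h₁, ← h₂]; ring⟩
  one_mem' := ⟨1, 1, hπ.not_dvd_one, by simp⟩
  add_mem' := by
    rintro _ _ ⟨a₁, b₁, hb₁, h₁⟩ ⟨a₂, b₂, hb₂, h₂⟩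
    exact ⟨a₁ * b₂ + a₂ * b₁, b₁ * b₂, fun h => (hπ.dvd_or_dvd h).elim hb₁ hb₂, by
      rw [map_add, map_mul, map_mul, map_mul, ← h₁, ← h₂]; ring⟩
  zero_mem' := ⟨0, 1, hπ.not_dvd_one, by simp⟩
  neg_mem' := by
    rintro _ ⟨a, b, hb, h⟩
    exact ⟨-a, b, hb, by rw [map_neg, ← h, neg_mul]⟩

namespace RingHom

theorem range_le_rangeLocalizationAtPrime {D F : Type*} [CommRing D] [CommRing F] (φ : D →+* F)
    {π : D} (hπ : Prime π) : φ.range ≤ φ.rangeLocalizationAtPrime hπ := by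
  rintro _ ⟨a, rfl⟩
  exact ⟨a, 1, hπ.not_dvd_one, by simp⟩

variable {D F : Type*} [CommRing D] [Field F] {φ : D →+* F} {π : D} (hπ : Prime π)

theorem inv_notMem_rangeLocalizationAtPrime (hφ : Function.Injective φ) :
    (φ π)⁻¹ ∉ φ.rangeLocalizationAtPrime hπ := by
  rintro ⟨a, b, hb, h⟩
  have hπ0 : φ π ≠ 0 := (map_ne_zero_iff φ hφ).2 hπ.ne_zero
  refine hb ⟨a, hφ ?_⟩
  rw [map_mul, ← h]
  field_simp

theorem exists_pow_mul_inv_mem_rangeLocalizationAtPrime [IsDomain D] [WfDvdMonoid D]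
    (hφ : Function.Injective φ) {c : F} (hc : c ∈ φ.rangeLocalizationAtPrime hπ) (hc0 : c ≠ 0) :
    ∃ k : ℕ, φ π ^ k * c⁻¹ ∈ φ.rangeLocalizationAtPrime hπ := by
  obtain ⟨a, b, hb, h⟩ := hc
  have ha0 : a ≠ 0 := by
    rintro rfl
    have hb0 : b ≠ 0 := by rintro rfl; exact hb (dvd_zero π)
    exact mul_ne_zero hc0 ((map_ne_zero_iff φ hφ).2 hb0) (by rw [h, map_zero])
  obtain ⟨a₀, ha, ha₀⟩ :=
    (FiniteMultiplicity.of_not_isUnit hπ.not_isUnit ha0).exists_eq_pow_mul_and_not_dvd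
  refine ⟨multiplicity π a, b, a₀, ha₀, ?_⟩
  rw [ha, map_mul, map_pow] at h
  rw [mul_right_comm, ← h, mul_comm c, mul_inv_cancel_right₀ hc0]

end RingHom

theorem exists_subring_inv_prime_notMem (F : Type*) [Field F] [CharZero F] {p : ℕ}
    (hp : p.Prime) : ∃ A : Subring F, (p : F)⁻¹ ∉ A ∧ ∀ z : F, ∃ k : ℕ, (p : F) ^ k * z ∈ A := by
  obtain ⟨s, hs⟩ := exists_isTranscendenceBasis ℤ F
  let φ : MvPolynomial s ℤ →+* F := MvPolynomial.aeval (R := ℤ) ((↑) : s → F)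
  have hφ : Function.Injective φ := algebraicIndependent_iff_injective_aeval.1 hs.1
  have hπ : Prime (MvPolynomial.C (p : ℤ) : MvPolynomial s ℤ) :=
    (MvPolynomial.prime_C_iff s).2 (Nat.prime_iff_prime_int.1 hp)
  have hφπ : φ (MvPolynomial.C (p : ℤ)) = p := by simp [φ]
  have hrange : φ.range ≤ φ.rangeLocalizationAtPrime hπ := φ.range_le_rangeLocalizationAtPrime hπ
  refine hφπ ▸ exists_subring_inv_notMem_of_isAlgebraic (hrange ⟨_, rfl⟩)
    (RingHom.inv_notMem_rangeLocalizationAtPrime hπ hφ)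
    (fun c hc hc0 => RingHom.exists_pow_mul_inv_mem_rangeLocalizationAtPrime hπ hφ hc hc0)
    (fun z => ?_)
  have hadjoin : (Algebra.adjoin ℤ (Set.range ((↑) : s → F))).toSubring ≤ φ.range := by
    rw [Algebra.adjoin_range_eq_range_aeval]; rfl
  exact (hs.isAlgebraic.isAlgebraic z).of_subring_le (hadjoin.trans hrange)

theorem exists_subring_inv_natCast_notMem (F : Type*) [Field F] [CharZero F] {n : ℕ}
    (hn : 1 < n) : ∃ A : Subring F, (n : F)⁻¹ ∉ A ∧ ∀ z : F, ∃ k : ℕ, (n : F) ^ k * z ∈ A := by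
  obtain ⟨A, hpA, hA⟩ := exists_subring_inv_prime_notMem F (Nat.minFac_prime hn.ne')
  set p := n.minFac
  obtain ⟨m, hm⟩ : p ∣ n := Nat.minFac_dvd n
  refine ⟨A, fun h => hpA ?_, fun z => ?_⟩
  · have hm0 : (m : F) ≠ 0 := Nat.cast_ne_zero.2 (by rintro rfl; omega)
    have : (p : F)⁻¹ = m * (n : F)⁻¹ := by
      rw [hm, Nat.cast_mul, mul_inv, mul_left_comm, mul_inv_cancel₀ hm0, mul_one]
    rw [this]
    exact mul_mem (natCast_mem A m) h
  · obtain ⟨k, hk⟩ := hA z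
    refine ⟨k, ?_⟩
    rw [hm, Nat.cast_mul, mul_pow, mul_comm _ ((m : F) ^ k), mul_assoc]
    exact mul_mem (pow_mem (natCast_mem A m) k) hk

theorem Ideal.exists_isPrime_charZero_quotient (R : Type*) [CommRing R] [CharZero R] :
    ∃ P : Ideal R, P.IsPrime ∧ CharZero (R ⧸ P) := by
  let M : Submonoid R := (nonZeroDivisors ℕ).map (Nat.castRingHom R)
  have hM : Disjoint ((⊥ : Ideal R) : Set R) M := by
    rw [Set.disjoint_left]
    rintro _ h ⟨m, hm, rfl⟩
    exact nonZeroDivisors.ne_zero hm (by simpa using h)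
  obtain ⟨P, hP, -, hPM⟩ := Ideal.exists_le_prime_disjoint ⊥ M hM
  refine ⟨P, hP, charZero_of_inj_zero fun m hm => by_contra fun hm0 => ?_⟩
  rw [← map_natCast (Ideal.Quotient.mk P), Ideal.Quotient.eq_zero_iff_mem] at hm
  exact Set.disjoint_left.1 hPM hm ⟨m, mem_nonZeroDivisors_of_ne_zero hm0, rfl⟩

theorem stmt3 {R : Type*} [CommRing R] [CharZero R]
    (h : ∃ n : ℕ, 1 < n ∧ IsUnit (n : R)) :
    Submaximal R := by
  obtain ⟨n, hn, hu⟩ := h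
  obtain ⟨P, hP, hPchar⟩ := Ideal.exists_isPrime_charZero_quotient R
  let F := FractionRing (R ⧸ P)
  let τ : R →+* F := (algebraMap (R ⧸ P) F).comp (Ideal.Quotient.mk P)
  obtain ⟨A, hnA, hA⟩ := exists_subring_inv_natCast_notMem F hn
  have hτ : τ ↑hu.unit⁻¹ = (n : F)⁻¹ :=
    eq_inv_of_mul_eq_one_left (by rw [← map_natCast τ, ← map_mul, hu.val_inv_mul, map_one])
  refine submaximal_of_forall_pow_mul_mem hu.val_inv_mul (A := A.comap τ) (by simpa [hτ])
    fun r => ?_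
  obtain ⟨k, hk⟩ := hA (τ r)
  exact ⟨k, by simpa using hk⟩
end

section
/- Let R be a commutative ring containing a unit x which is not algebraic over the prime subring of R (i.e., x satisfies no nonzero polynomial with coefficients in the image of ℤ in R). Then R has a maximal subring. -/
open Polynomial

lemma Submaximal.of_surjective {R S : Type*} [CommRing R] [CommRing S] {f : R →+* S}
    (hf : Function.Surjective f) (h : Submaximal S) : Submaximal R := by
  obtain ⟨M, hM, hMmax⟩ := h
  have hmap : (M.comap f).map f = M := Subring.map_comap_eq_self_of_surjective hf M
  refine ⟨M.comap f, fun htop => hM ?_, fun T hT => ?_⟩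
  · rw [← hmap, htop, ← f.range_eq_map, f.range_eq_top.2 hf]
  have hTmap : T.map f = ⊤ := by
    refine hMmax _ (lt_of_le_of_ne ?_ fun h => hT.not_ge ?_)
    · exact hmap.ge.trans ((Subring.gc_map_comap f).monotone_l hT.le)
    · exact ((Subring.gc_map_comap f).le_u_l T).trans (h ▸ le_rfl)
  rw [Subring.eq_top_iff']
  intro r
  obtain ⟨u, hu, hfu⟩ := hTmap.ge (Subring.mem_top (f r))
  have hker : r - u ∈ T := hT.le (by simp [Subring.mem_comap, hfu, M.zero_mem])
  simpa using T.add_mem hker hu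

lemma Submaximal.of_closure_insert_eq_top {R : Type*} [CommRing R] {W : Subring R} {x : R}
    (hx : x ∉ W) (hW : Subring.closure (insert x (W : Set R)) = ⊤) : Submaximal R := by
  obtain ⟨M, hWM, hM⟩ := zorn_le_nonempty₀ {W' : Subring R | x ∉ W'}
    (fun c hc hchain V hV => ⟨sSup c, fun hmem => by
      obtain ⟨W', hW'c, hxW'⟩ :=
        (Subring.mem_sSup_of_directedOn ⟨V, hV⟩ hchain.directedOn).1 hmem
      exact hc hW'c hxW', fun _ => le_sSup⟩) W hx
  refine ⟨M, fun htop => hM.prop (htop ▸ Subring.mem_top x), fun T hMT => ?_⟩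
  have hxT : x ∈ T := by_contra fun hxT => hM.not_prop_of_gt hMT hxT
  rw [eq_top_iff, ← hW, Subring.closure_le]
  exact Set.insert_subset hxT (hWM.trans hMT.le)

lemma Ideal.map_C_comap_C_eq_of_mem_minimalPrimes {A : Type*} [CommRing A] {I : Ideal A}
    {q : Ideal A[X]} (hq : q ∈ (I.map C).minimalPrimes) : (q.comap C).map C = q := by
  have := hq.isPrime
  refine le_antisymm map_comap_le (hq.2 ⟨isPrime_map_C_of_isPrime, ?_⟩ map_comap_le)
  exact map_mono (map_le_iff_le_comap.1 hq.1.2)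

lemma exists_isPrime_forall_aeval_quotient_ne_zero {R : Type*} [CommRing R] [Nontrivial R]
    (x : R) (halg : ∀ p : ℤ[X], p.map (Int.castRingHom R) ≠ 0 → aeval x p ≠ 0) :
    ∃ P : Ideal R, P.IsPrime ∧ ∀ p : ℤ[X], p.map (Int.castRingHom (R ⧸ P)) ≠ 0 →
      aeval (Ideal.Quotient.mk P x) p ≠ 0 := by
  set φ : ℤ[X] →+* R := (aeval x).toRingHom
  have hker : RingHom.ker φ = (RingHom.ker (Int.castRingHom R)).map C := by
    ext p
    have hmap : p.map (Int.castRingHom R) = 0 ↔ p ∈ (RingHom.ker (Int.castRingHom R)).map C := by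
      simp [Polynomial.ext_iff, Ideal.mem_map_C_iff, coeff_map]
    rw [← hmap, RingHom.mem_ker]
    refine ⟨not_imp_not.1 (halg p), fun h => ?_⟩
    simp [φ, aeval_def, eval₂_eq_eval_map, h]
  obtain ⟨q, hq⟩ := Ideal.nonempty_minimalPrimes (RingHom.ker_ne_top φ)
  obtain ⟨P, hP, -, hPq⟩ := Ideal.exists_comap_eq_of_mem_minimalPrimes (I := ⊥) φ q hq
  refine ⟨P, hP, fun p hp hp0 => hp ?_⟩
  have hpq : p ∈ q := by
    rw [← hPq, Ideal.mem_comap, ← Ideal.Quotient.eq_zero_iff_mem]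
    exact (aeval_algHom_apply (Ideal.Quotient.mkₐ ℤ P) x p).symm.trans hp0
  rw [hker] at hq
  rw [← Ideal.map_C_comap_C_eq_of_mem_minimalPrimes hq, Ideal.mem_map_C_iff] at hpq
  ext n
  rw [coeff_map, coeff_zero, eq_intCast, ← map_intCast (Ideal.Quotient.mk P),
    Ideal.Quotient.eq_zero_iff_mem]
  simpa [← hPq, φ] using hpq n

lemma transcendental_bot_algebraMap {A K : Type*} [CommRing A] [CommRing K] [Algebra A K]
    (hinj : Function.Injective (algebraMap A K)) {x : A}
    (halg : ∀ p : ℤ[X], p.map (Int.castRingHom A) ≠ 0 → aeval x p ≠ 0) :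
    Transcendental (⊥ : Subring K) (algebraMap A K x) := by
  rw [transcendental_iff]
  intro q hq
  obtain ⟨z, hz⟩ := (mem_lifts (f := Int.castRingHom K) (q.map (⊥ : Subring K).subtype)).1 <| by
    rw [lifts_iff_coeffs_subset_range]
    intro a ha
    obtain ⟨n, -, rfl⟩ := mem_coeffs_iff.1 ha
    simpa [coeff_map] using Subring.mem_bot.1 (q.coeff n).2
  have hzx : aeval x z = 0 := by
    refine hinj ?_
    rw [← aeval_algebraMap_apply, map_zero, ← eval_map_algebraMap, algebraMap_int_eq, hz,
      ← hq, ← eval_map_algebraMap]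
    rfl
  have hzA : z.map (Int.castRingHom A) = 0 := by_contra fun h => halg z h hzx
  have hqK : q.map (⊥ : Subring K).subtype = 0 := by
    rw [← hz, show Int.castRingHom K = (algebraMap A K).comp (Int.castRingHom A) from
      RingHom.ext_int _ _, ← Polynomial.map_map, hzA, Polynomial.map_zero]
  exact Polynomial.map_injective _ Subtype.val_injective (hqK.trans (Polynomial.map_zero _).symm)

lemma transcendental_sSup_of_isChain {K : Type*} [CommRing K] {c : Set (Subring K)}
    (hc : c.Nonempty) (hchain : IsChain (· ≤ ·) c) {y : K} (h : ∀ L ∈ c, Transcendental L y) :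
    Transcendental (sSup c : Subring K) y := by
  rw [transcendental_iff]
  intro q hq
  set p := q.map (sSup c).subtype
  have hsub : (p.coeffs : Set K) ⊆ ⋃ L ∈ c, (L : Set K) := by
    rw [← Subring.coe_sSup_of_directedOn hc hchain.directedOn]
    intro a ha
    obtain ⟨n, -, rfl⟩ := mem_coeffs_iff.1 ha
    simp [p, coeff_map]
  obtain ⟨L, hL, hpL⟩ := hchain.directedOn.exists_mem_subset_of_finset_subset_biUnion hc hsub
  obtain ⟨q', hq'⟩ := (mem_lifts (f := L.subtype) p).1 <| by
    rwa [lifts_iff_coeffs_subset_range, Subring.coe_subtype, Subtype.range_coe]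
  have hq'y : aeval y q' = 0 := by
    rw [← eval_map_algebraMap] at hq ⊢
    exact hq' ▸ hq
  have hp : p = 0 := by rw [← hq', transcendental_iff.1 (h L hL) q' hq'y, Polynomial.map_zero]
  exact Polynomial.map_injective _ Subtype.val_injective (hp.trans (Polynomial.map_zero _).symm)

lemma exists_maximal_transcendental {K : Type*} [CommRing K] {L₀ : Subring K} {y : K}
    (h : Transcendental L₀ y) :
    ∃ L : Subring K, Maximal (fun L : Subring K => Transcendental L y) L := by
  obtain ⟨L, -, hL⟩ := zorn_le_nonempty₀ {L : Subring K | Transcendental L y}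
    (fun c hc hchain L hL => ⟨sSup c, transcendental_sSup_of_isChain ⟨L, hL⟩ hchain hc,
      fun _ => le_sSup⟩) L₀ h
  exact ⟨L, hL⟩

lemma aevalAeval_eq_eval_map {R A : Type*} [CommRing R] [CommRing A] [Algebra R A] (x y : A)
    (Q : R[X][X]) : aevalAeval x y Q = eval y (Q.map (aeval x).toRingHom) := by
  have : ((aevalAeval x y).toRingHom : R[X][X] →+* A) =
      (evalRingHom y).comp (mapRingHom (aeval x).toRingHom) := by
    ext <;> simp
  exact congr($this Q)

lemma exists_eval_map_aeval_eq_zero_of_maximal {K : Type*} [Field K] {L : Subring K} {y : K}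
    (hL : Maximal (fun L : Subring K => Transcendental L y) L) (r : K) :
    ∃ Q : L[X][X], Q ≠ 0 ∧ eval r (Q.map (aeval y).toRingHom) = 0 := by
  by_cases hr : r ∈ L
  · refine ⟨X - C (C ⟨r, hr⟩), X_sub_C_ne_zero _, ?_⟩
    rw [Polynomial.map_sub, map_X, map_C, eval_sub, eval_X, eval_C]
    exact sub_eq_zero.2 (aeval_C (R := L) y ⟨r, hr⟩).symm
  set L' := (Algebra.adjoin L {r}).toSubring
  have hlt : L < L' := by
    refine lt_of_le_of_ne (fun a ha => (Algebra.adjoin L {r}).algebraMap_mem (⟨a, ha⟩ : L))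
      fun h => hr ?_
    rw [h]
    exact Algebra.subset_adjoin rfl
  obtain ⟨p, hp0, hpy⟩ : IsAlgebraic L' y := not_not.1 (hL.not_prop_of_gt hlt)
  obtain ⟨P, hP⟩ :=
    (mem_lifts (f := (aeval r : L[X] →ₐ[L] K).toRingHom) (p.map L'.subtype)).1 <| by
      rw [lifts_iff_coeff_lifts]
      intro n
      have : (p.coeff n : K) ∈ Algebra.adjoin L {r} := (p.coeff n).2
      rw [Algebra.adjoin_singleton_eq_range_aeval] at this
      simpa [coeff_map] using this
  refine ⟨Bivariate.swap P, ?_, ?_⟩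
  · rw [ne_eq, map_eq_zero_iff _ (AlgEquiv.injective _)]
    rintro rfl
    rw [Polynomial.map_zero, eq_comm, Polynomial.map_eq_zero_iff Subtype.val_injective] at hP
    exact hp0 hP
  · rw [← aevalAeval_eq_eval_map, Bivariate.aevalAeval_swap, aevalAeval_eq_eval_map, hP]
    exact (eval_map_algebraMap p y).trans hpy

lemma Subring.mem_of_isIntegral_of_inv_mem {K : Type*} [Field K] {O : Subring K} {x : K}
    (hx : IsIntegral O x) (hinv : x⁻¹ ∈ O) : x ∈ O := by
  obtain rfl | hx0 := eq_or_ne x 0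
  · exact O.zero_mem
  obtain ⟨p, hp, hpx⟩ := hx
  let := invertibleOfNonzero hx0
  have hr : aeval x⁻¹ p.reverse = 0 := by
    have := eval₂_reverse_mul_pow (algebraMap O K) x p
    rw [hpx, invOf_eq_inv, mul_eq_zero] at this
    exact this.resolve_right (pow_ne_zero _ hx0)
  set e := aeval x⁻¹ p.reverse.divX
  have he : e ∈ O := by
    rw [show e = algebraMap O K (aeval ⟨x⁻¹, hinv⟩ p.reverse.divX) from
      aeval_algebraMap_apply K (⟨x⁻¹, hinv⟩ : O) _]
    exact SetLike.coe_mem _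
  -- the reversed polynomial has constant term `1`, so `x⁻¹ * e = -1`
  have hre : x⁻¹ * e + 1 = 0 := by
    have := congrArg (aeval x⁻¹) (X_mul_divX_add p.reverse)
    rw [coeff_zero_reverse, hp.leadingCoeff, hr] at this
    simpa [e] using this
  have : x = -e := by linear_combination x * hre - e * mul_inv_cancel₀ hx0
  exact this ▸ O.neg_mem he

lemma isIntegral_of_monic_of_coeff_mem {R : Type*} [CommRing R] {O : Subring R} {p : R[X]}
    (hp : p.Monic) (hcoeff : ∀ i, p.coeff i ∈ O) {z : R} (hz : p.eval z = 0) :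
    IsIntegral O z := by
  have hsub : (p.coeffs : Set R) ⊆ O := fun a ha => by
    obtain ⟨i, -, rfl⟩ := mem_coeffs_iff.1 ha
    exact hcoeff i
  refine ⟨p.toSubring O hsub, (monic_toSubring _ _ _).2 hp, ?_⟩
  rw [eval₂_eq_eval_map]
  exact (map_toSubring p O hsub).symm ▸ hz

section ProperRatFunc

variable {K : Type*} [Field K] (A : Type*) [CommRing A] [IsDomain A] [Algebra A K] (y : K)

/-- For `A` a field and `y` transcendental over it, this is the valuation ring of `A(y)` at
infinity. -/
def properRatFuncAt : Subring K where
  carrier := {k | ∃ f g : A[X], f.natDegree ≤ g.natDegree ∧ aeval y g ≠ 0 ∧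
    k = aeval y f / aeval y g}
  zero_mem' := ⟨0, 1, by simp, by simp, by simp⟩
  one_mem' := ⟨1, 1, le_rfl, by simp, by simp⟩
  add_mem' := by
    rintro _ _ ⟨f₁, g₁, hd₁, hg₁, rfl⟩ ⟨f₂, g₂, hd₂, hg₂, rfl⟩
    have h₁ : g₁ ≠ 0 := by rintro rfl; simp at hg₁
    have h₂ : g₂ ≠ 0 := by rintro rfl; simp at hg₂
    refine ⟨f₁ * g₂ + f₂ * g₁, g₁ * g₂, ?_, by simpa using ⟨hg₁, hg₂⟩, ?_⟩
    · rw [natDegree_mul h₁ h₂]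
      exact (natDegree_add_le _ _).trans
        (max_le (natDegree_mul_le.trans (by omega)) (natDegree_mul_le.trans (by omega)))
    · simp only [map_add, map_mul]
      field_simp
  neg_mem' := by
    rintro _ ⟨f, g, hd, hg, rfl⟩
    exact ⟨-f, g, by rwa [natDegree_neg], hg, by simp [neg_div]⟩
  mul_mem' := by
    rintro _ _ ⟨f₁, g₁, hd₁, hg₁, rfl⟩ ⟨f₂, g₂, hd₂, hg₂, rfl⟩
    have h₁ : g₁ ≠ 0 := by rintro rfl; simp at hg₁
    have h₂ : g₂ ≠ 0 := by rintro rfl; simp at hg₂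
    refine ⟨f₁ * f₂, g₁ * g₂, ?_, by simpa using ⟨hg₁, hg₂⟩, by simp [mul_div_mul_comm]⟩
    rw [natDegree_mul h₁ h₂]
    exact natDegree_mul_le.trans (by omega)

variable {A y}

lemma div_mem_properRatFuncAt {f g : A[X]} (hfg : f.natDegree ≤ g.natDegree)
    (hg : aeval y g ≠ 0) : aeval y f / aeval y g ∈ properRatFuncAt A y :=
  ⟨f, g, hfg, hg, rfl⟩

lemma div_mul_inv_pow_mem_properRatFuncAt (hy : y ≠ 0) {f g : A[X]} {k : ℕ}
    (hfg : f.natDegree ≤ k + g.natDegree) (hg : aeval y g ≠ 0) :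
    aeval y f / aeval y g * y⁻¹ ^ k ∈ properRatFuncAt A y := by
  have hg0 : g ≠ 0 := by rintro rfl; simp at hg
  convert div_mem_properRatFuncAt (y := y) (f := f) (g := X ^ k * g) (by
    rwa [natDegree_X_pow_mul _ hg0, add_comm]) (by simp [hy, hg]) using 1
  rw [map_mul, map_pow, aeval_X, inv_pow, div_eq_mul_inv, div_eq_mul_inv, mul_inv]
  ring

lemma inv_mem_properRatFuncAt (hy : y ≠ 0) : y⁻¹ ∈ properRatFuncAt A y := by
  have := div_mem_properRatFuncAt (A := A) (y := y) (f := 1) (g := X) (by simp) (by rwa [aeval_X])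
  rwa [map_one, aeval_X, one_div] at this

lemma self_notMem_properRatFuncAt (hy : Transcendental A y) : y ∉ properRatFuncAt A y := by
  rintro ⟨f, g, hfg, hg, hyfg⟩
  have hg0 : g ≠ 0 := by rintro rfl; simp at hg
  refine hy ⟨X * g - f, fun h => ?_, ?_⟩
  · have := congrArg natDegree (sub_eq_zero.1 h)
    rw [natDegree_X_mul hg0] at this
    omega
  · rw [eq_div_iff hg] at hyfg
    simp [hyfg]

lemma exists_isIntegral_inv_pow_mul (hy : Transcendental A y) {Q : A[X][X]} (hQ : Q ≠ 0)
    {r : K} (hr : eval r (Q.map (aeval y).toRingHom) = 0) :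
    ∃ n, IsIntegral (properRatFuncAt A y) (y⁻¹ ^ n * r) := by
  have hy0 : y ≠ 0 := fun h => hy (h ▸ isAlgebraic_zero)
  have hinj : Function.Injective (aeval y).toRingHom := transcendental_iff_injective.1 hy
  set G := Q.map (aeval y).toRingHom
  have hGc : G.leadingCoeff ≠ 0 := leadingCoeff_ne_zero.2 ((Polynomial.map_ne_zero_iff hinj).2 hQ)
  set D := Q.natDegree
  have hlc : G.leadingCoeff = aeval y (Q.coeff D) := leadingCoeff_map_of_injective hinj Q
  set n := Q.support.sup fun j => (Q.coeff j).natDegree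
  have hn : ∀ j, (Q.coeff j).natDegree ≤ n := fun j => by
    by_cases hj : j ∈ Q.support
    · exact Finset.le_sup (f := fun j => (Q.coeff j).natDegree) hj
    · simp [notMem_support_iff.1 hj]
  set p := C G.leadingCoeff⁻¹ * G
  have hp : p.Monic := monic_C_mul_of_mul_leadingCoeff_eq_one (inv_mul_cancel₀ hGc)
  have hpD : p.natDegree = D := by
    rw [natDegree_C_mul (inv_ne_zero hGc), natDegree_map_eq_of_injective hinj]
  -- the `i`-th coefficient of `p.scaleRoots (y⁻¹ ^ n)` is `Q_i(y) / (y ^ (n * (D - i)) * Q_D(y))`,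
  -- a proper fraction because `deg Q_i ≤ n`
  refine ⟨n, isIntegral_of_monic_of_coeff_mem ((monic_scaleRoots_iff (y⁻¹ ^ n)).2 hp)
    (fun i => ?_) ?_⟩
  · rw [coeff_scaleRoots, hpD]
    rcases lt_or_ge D i with hDi | hiD
    · rw [coeff_eq_zero_of_natDegree_lt (hpD ▸ hDi), zero_mul]
      exact Subring.zero_mem _
    have hdeg : (Q.coeff i).natDegree ≤ n * (D - i) + (Q.coeff D).natDegree := by
      rcases eq_or_lt_of_le hiD with rfl | hlt
      · simp
      · have := hn i
        have : n ≤ n * (D - i) := Nat.le_mul_of_pos_right n (by omega)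
        omega
    convert div_mul_inv_pow_mem_properRatFuncAt hy0 hdeg (hlc ▸ hGc) using 1
    simp only [p]
    rw [coeff_C_mul, hlc, coeff_map, pow_mul]
    simp only [AlgHom.toRingHom_eq_coe, RingHom.coe_coe, div_eq_mul_inv]
    ring
  · rw [scaleRoots_eval_mul, eval_mul, eval_C, hr, mul_zero, mul_zero]

end ProperRatFunc

theorem Submaximal.of_isDomain {A : Type*} [CommRing A] [IsDomain A] {x : A} (hx : IsUnit x)
    (halg : ∀ p : ℤ[X], p.map (Int.castRingHom A) ≠ 0 → aeval x p ≠ 0) : Submaximal A := by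
  set K := FractionRing A
  set y := algebraMap A K x
  obtain ⟨L, hL⟩ := exists_maximal_transcendental
    (transcendental_bot_algebraMap (IsFractionRing.injective A K) halg)
  have hy : Transcendental L y := hL.prop
  have hy0 : y ≠ 0 := (hx.map (algebraMap A K)).ne_zero
  set W := (integralClosure (properRatFuncAt L y) K).toSubring.comap (algebraMap A K)
  have hxW : x ∉ W := fun hxW => self_notMem_properRatFuncAt hy
    (Subring.mem_of_isIntegral_of_inv_mem hxW (inv_mem_properRatFuncAt hy0))
  refine Submaximal.of_closure_insert_eq_top hxW (eq_top_iff.2 fun r _ => ?_)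
  obtain ⟨Q, hQ, hQr⟩ := exists_eval_map_aeval_eq_zero_of_maximal hL (algebraMap A K r)
  obtain ⟨n, hn⟩ := exists_isIntegral_inv_pow_mul hy hQ hQr
  obtain ⟨u, rfl⟩ := hx
  have hW : ↑u⁻¹ ^ n * r ∈ W := by
    simpa [W, y, map_units_inv, mem_integralClosure_iff] using hn
  have hr : r = ↑u ^ n * (↑u⁻¹ ^ n * r) := by
    rw [← mul_assoc, ← mul_pow, Units.mul_inv, one_pow, one_mul]
  rw [hr]
  exact mul_mem (pow_mem (Subring.subset_closure (Set.mem_insert _ _)) _)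
    (Subring.subset_closure (Set.mem_insert_of_mem _ hW))

theorem stmt4 {R : Type*} [CommRing R] [Nontrivial R] (x : R) (hx : IsUnit x)
    (halg : ∀ p : Polynomial ℤ, p.map (Int.castRingHom R) ≠ 0 → Polynomial.aeval x p ≠ 0) :
    Submaximal R := by
  obtain ⟨P, hP, hPx⟩ := exists_isPrime_forall_aeval_quotient_ne_zero x halg
  exact Submaximal.of_surjective Ideal.Quotient.mk_surjective
    (Submaximal.of_isDomain (hx.map (Ideal.Quotient.mk P)) hPx)
end

section
/- Let R be a commutative ring and x ∈ R an element not algebraic over the prime subring of R. If R has characteristic zero, then there exists a prime ideal Q of R such that R/Q contains a subring isomorphic to ℤ[x] (the polynomial ring over ℤ); if R has characteristic n > 0 and p is a prime divisor of n, then there exists a prime ideal Q of R such that R/Q contains a subring isomorphic to a polynomial ring in one variable over 𝔽_p. -/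
/-!
Let `φ : ℤ[X] → R` be evaluation at `x` and let `P ⊆ ℤ[X]` be the prime `0` (characteristic zero)
or `(p)` (characteristic `n`, `p ∣ n`), so that `ℤ[X] ⧸ P` is `ℤ[X]` or `𝔽_p[X]`. In both cases
`P` is the contraction of an ideal `I` of `R` (namely `0`, resp. `pR`): when `n = p q`, a relation
`φ f ∈ pR` gives `φ (q f) = 0`, so by transcendence of `x` every coefficient of `q f` is divisible
by `n`, i.e. every coefficient of `f` by `p`. A prime `Q ⊇ I` maximal with respect to avoiding
`φ (ℤ[X] \ P)` then contracts exactly to `P`, and `ℤ[X] ⧸ P` embeds into `R ⧸ Q`.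
-/

open Polynomial Function

namespace Ideal

variable {A R : Type*} [CommRing A] [CommRing R]

theorem exists_isPrime_comap_eq_of_comap_eq (φ : A →+* R) {I : Ideal R} {P : Ideal A}
    [P.IsPrime] (h : I.comap φ = P) : ∃ Q : Ideal R, Q.IsPrime ∧ Q.comap φ = P := by
  have hdisj : Disjoint (I : Set R) (P.primeCompl.map φ) := by
    rw [Set.disjoint_left]
    rintro _ hI ⟨a, haP, rfl⟩
    exact haP (h ▸ hI)
  obtain ⟨Q, hQ, hIQ, hQdisj⟩ := I.exists_le_prime_disjoint _ hdisj
  refine ⟨Q, hQ, le_antisymm (fun a ha => ?_) (h ▸ comap_mono hIQ)⟩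
  by_contra haP
  exact Set.disjoint_left.mp hQdisj ha ⟨a, haP, rfl⟩

theorem exists_isPrime_injective_of_mem_iff {B : Type*} [CommRing B] [IsDomain B]
    (φ : A →+* R) (π : A →+* B) (hπ : Surjective π) (I : Ideal R)
    (h : ∀ a, φ a ∈ I ↔ π a = 0) : ∃ Q : Ideal R, Q.IsPrime ∧ ∃ f : B →+* R ⧸ Q, Injective f := by
  have := RingHom.ker_isPrime π
  obtain ⟨Q, hQ, hQP⟩ := exists_isPrime_comap_eq_of_comap_eq φ (P := RingHom.ker π) (Ideal.ext h)
  refine ⟨Q, hQ, (quotientMap Q φ hQP.ge).comp (RingHom.quotientKerEquivOfSurjective hπ).symm, ?_⟩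
  rw [RingHom.coe_comp]
  exact (quotientMap_injective' hQP.le).comp
    (RingHom.quotientKerEquivOfSurjective hπ).symm.injective

end Ideal

theorem Polynomial.map_intCast_zmod_eq_zero_iff (p : ℕ) (f : ℤ[X]) :
    f.map (Int.castRingHom (ZMod p)) = 0 ↔ C (p : ℤ) ∣ f := by
  rw [C_dvd_iff_dvd_coeff, Polynomial.ext_iff]
  simp [ZMod.intCast_zmod_eq_zero_iff_dvd]

section Transcendental

variable {R : Type*} [CommRing R] {x : R}
  (hx : ∀ f : ℤ[X], f.map (Int.castRingHom R) ≠ 0 → aeval x f ≠ 0)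
include hx

theorem aeval_eq_zero_iff_of_charZero [CharZero R] (f : ℤ[X]) : aeval x f = 0 ↔ f = 0 := by
  refine ⟨fun hf => ?_, fun hf => hf ▸ map_zero _⟩
  by_contra hf0
  exact hx f (Polynomial.map_ne_zero_iff Int.cast_injective |>.mpr hf0) hf

theorem aeval_mem_span_natCast_iff_of_charP {n p : ℕ} [CharP R n] (hn : 0 < n) (hpn : p ∣ n)
    (f : ℤ[X]) : aeval x f ∈ Ideal.span {(p : R)} ↔ f.map (Int.castRingHom (ZMod p)) = 0 := by
  rw [Ideal.mem_span_singleton, map_intCast_zmod_eq_zero_iff]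
  refine ⟨fun ⟨c, hc⟩ => ?_, fun h => by simpa using map_dvd (aeval x) h⟩
  obtain ⟨q, rfl⟩ := hpn
  have hq : (q : ℤ) ≠ 0 := by exact_mod_cast right_ne_zero_of_mul hn.ne'
  have hqf : aeval x (C (q : ℤ) * f) = 0 := by
    rw [map_mul, aeval_C, hc, algebraMap_int_eq, eq_intCast, ← mul_assoc, Int.cast_natCast,
      mul_comm (q : R), ← Nat.cast_mul, CharP.cast_eq_zero, zero_mul]
  have hqf' : (C (q : ℤ) * f).map (Int.castRingHom R) = 0 := not_imp_not.mp (hx _) hqf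
  rw [C_dvd_iff_dvd_coeff]
  intro i
  have hi : ((q * f.coeff i : ℤ) : R) = 0 := by
    simpa only [coeff_map, coeff_C_mul, coeff_zero, Int.coe_castRingHom]
      using congrArg (coeff · i) hqf'
  rwa [CharP.intCast_eq_zero_iff R (p * q), Nat.cast_mul, mul_comm (q : ℤ),
    mul_dvd_mul_iff_right hq] at hi

end Transcendental

theorem stmt6_general {R : Type*} [CommRing R] (x : R)
    (halg : ∀ p : Polynomial ℤ, p.map (Int.castRingHom R) ≠ 0 → Polynomial.aeval x p ≠ 0) :
    (CharZero R →
      ∃ Q : Ideal R, Q.IsPrime ∧ ∃ f : Polynomial ℤ →+* R ⧸ Q, Function.Injective f) ∧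
    (∀ n : ℕ, 0 < n → CharP R n → ∀ p : ℕ, p.Prime → p ∣ n →
      ∃ Q : Ideal R, Q.IsPrime ∧ ∃ f : Polynomial (ZMod p) →+* R ⧸ Q, Function.Injective f) := by
  refine ⟨fun _ => ?_, fun n hn _ p hp hpn => ?_⟩
  · exact Ideal.exists_isPrime_injective_of_mem_iff (aeval x).toRingHom (.id _) surjective_id ⊥
      fun f => Ideal.mem_bot.trans (aeval_eq_zero_iff_of_charZero halg f)
  · have := Fact.mk hp
    exact Ideal.exists_isPrime_injective_of_mem_iff (aeval x).toRingHom
      (mapRingHom (Int.castRingHom (ZMod p))) (map_surjective _ ZMod.intCast_surjective)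
      (Ideal.span {(p : R)})
      (aeval_mem_span_natCast_iff_of_charP halg hn hpn)

theorem stmt6 {R : Type*} [CommRing R] [Nontrivial R] (x : R)
    (halg : ∀ p : Polynomial ℤ, p.map (Int.castRingHom R) ≠ 0 → Polynomial.aeval x p ≠ 0) :
    (CharZero R →
      ∃ Q : Ideal R, Q.IsPrime ∧ ∃ f : Polynomial ℤ →+* R ⧸ Q, Function.Injective f) ∧
    (∀ n : ℕ, 0 < n → CharP R n → ∀ p : ℕ, p.Prime → p ∣ n →
      ∃ Q : Ideal R, Q.IsPrime ∧ ∃ f : Polynomial (ZMod p) →+* R ⧸ Q, Function.Injective f) :=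
  stmt6_general x halg
end

section
/- Let D be a principal ideal domain and R ⊇ D an integral domain such that D is integrally closed in R and U(R) ≠ U(D). Then R has a maximal subring. -/
/-!
Take a unit `ξ` of `R` with inverse `η` and a nonarchimedean real absolute value, defined on a
subring of `K = Frac R`, under which `η` is small: the `𝔭`-adic one on `D` when a nonunit of `D`
becomes a unit of `R` (the algebraic case reduces to this by writing `x = e / d` in lowest terms
over the PID `D`), and a Gauss norm on `D[x]` when the unit `x` is transcendental over `D`.
By Zorn it extends to a maximal partial absolute value `m`, whose domain is a field over which
`K` is integral. With `O` the unit ball of `m` and `T` the elements of `R` integral over `O`, we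
get `ξ ∉ T` because `m ξ > 1`, while `r η ^ k ∈ T` for large `k` because `m η < 1`. So
`R = T[ξ]`, and a subring maximal among those containing `T` but not `ξ` is a maximal subring.
-/

open Polynomial
open scoped NNReal

namespace Subring

variable {B : Type*} [CommRing B] (A : Subring B)

theorem isIntegral_iff_exists_monic_coeff_mem {x : B} :
    IsIntegral A x ↔ ∃ p : B[X], p.Monic ∧ (∀ i, p.coeff i ∈ A) ∧ p.eval x = 0 := by
  constructor
  · rintro ⟨p, hp, hpx⟩
    exact ⟨p.map A.subtype, hp.map _, fun i => by simp [coeff_map], by rwa [eval_map]⟩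
  · rintro ⟨p, hp, hpA, hpx⟩
    have hcoeffs : (p.coeffs : Set B) ⊆ A := fun c hc => by
      obtain ⟨n, -, rfl⟩ := mem_coeffs_iff.1 hc
      exact hpA n
    refine ⟨p.toSubring A hcoeffs, (monic_toSubring _ _ _).2 hp, ?_⟩
    change eval₂ A.subtype x _ = 0
    rwa [← eval_map, map_toSubring]

variable {A}

theorem mem_of_isIntegral_of_mul_eq_one_s7 {x y : B} (hx : IsIntegral A x) (hy : y ∈ A)
    (hxy : x * y = 1) : x ∈ A := by
  obtain ⟨p, hp, hpA, hpx⟩ := (isIntegral_iff_exists_monic_coeff_mem A).1 hx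
  rw [eval_eq_sum_range, Finset.sum_range_succ, hp.coeff_natDegree, one_mul] at hpx
  rcases Nat.eq_zero_or_pos p.natDegree with hn | hn
  · rw [hn] at hpx
    simp only [Finset.range_zero, Finset.sum_empty, pow_zero, zero_add] at hpx
    rw [show x = 0 by rw [← mul_one x, hpx, mul_zero]]
    exact A.zero_mem
  obtain ⟨k, hk⟩ := Nat.exists_eq_succ_of_ne_zero hn.ne'
  -- multiplying the equation by `y ^ k` expresses `x` as a polynomial in `y` over `A`
  have hx : x = -∑ i ∈ Finset.range (k + 1), p.coeff i * y ^ (k - i) := by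
    rw [hk] at hpx
    have := congrArg (· * y ^ k) hpx
    simp only [add_mul, Finset.sum_mul, zero_mul] at this
    rw [eq_neg_iff_add_eq_zero, add_comm, ← this]
    congr 1
    · refine Finset.sum_congr rfl fun i hi => ?_
      have hxyi : (x * y) ^ i = 1 := by rw [hxy, one_pow]
      conv_rhs => rw [← Nat.add_sub_cancel' (Finset.mem_range_succ_iff.1 hi), pow_add]
      linear_combination (-(p.coeff i * y ^ (k - i))) * hxyi
    · rw [pow_succ', mul_assoc, ← mul_pow, hxy, one_pow, mul_one]
  rw [hx]
  exact A.neg_mem (A.sum_mem fun i _ => A.mul_mem (hpA i) (A.pow_mem hy _))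

end Subring

theorem submaximal_of_closure_insert_eq_top {R : Type*} [CommRing R] (T : Subring R) {x : R}
    (hx : x ∉ T) (hT : Subring.closure (insert x (T : Set R)) = ⊤) : Submaximal R := by
  obtain ⟨M, hTM, hM⟩ := zorn_le_nonempty₀ {W : Subring R | T ≤ W ∧ x ∉ W}
    (fun c hcs hc W hW => by
      refine ⟨sSup c, ⟨(hcs hW).1.trans (le_sSup hW), fun hxc => ?_⟩, fun _ => le_sSup⟩
      obtain ⟨W', hW', hxW'⟩ := (Subring.mem_sSup_of_directedOn ⟨W, hW⟩ hc.directedOn).1 hxc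
      exact (hcs hW').2 hxW')
    T ⟨le_rfl, hx⟩
  refine ⟨M, fun h => hM.prop.2 (h ▸ Subring.mem_top x), fun W hMW => ?_⟩
  have hxW : x ∈ W := by_contra fun hxW => hMW.not_ge (hM.2 ⟨hTM.trans hMW.le, hxW⟩ hMW.le)
  rw [eq_top_iff, ← hT, Subring.closure_le]
  exact Set.insert_subset hxW (hTM.trans hMW.le)

namespace AbsoluteValue

section gaussNorm

variable {A : Type*} [CommRing A] (abv : AbsoluteValue A ℝ) (hna : IsNonarchimedean abv) {c : ℝ}
  (hc : 0 < c)

noncomputable def gaussNorm : AbsoluteValue A[X] ℝ :=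
  haveI := gaussNorm_isAbsoluteValue hna hc
  IsAbsoluteValue.toAbsoluteValue (Polynomial.gaussNorm abv c)

theorem gaussNorm_apply (p : A[X]) : abv.gaussNorm hna hc p = p.gaussNorm abv c := rfl

theorem isNonarchimedean_gaussNorm : IsNonarchimedean (abv.gaussNorm hna hc) :=
  Polynomial.isNonarchimedean_gaussNorm abv hna hc.le

end gaussNorm

theorem isNonarchimedean_trivial {A : Type*} [Semiring A] [DecidablePred (· = (0 : A))]
    [NoZeroDivisors A] : IsNonarchimedean (AbsoluteValue.trivial : AbsoluteValue A ℝ) := by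
  intro a b
  by_cases hab : a + b = 0
  · simp [hab]
  obtain ha | hb : a ≠ 0 ∨ b ≠ 0 := by
    contrapose! hab
    simp [hab]
  · simp [ha, hab]
  · simp [hb, hab]

end AbsoluteValue

/-- A nonarchimedean real absolute value on the subring `dom` of `F`; the values of `toFun`
outside `dom` carry no meaning. -/
structure PartialAbs (F : Type*) [Field F] where
  dom : Subring F
  toFun : F → ℝ
  nonneg : ∀ a ∈ dom, 0 ≤ toFun a
  eq_zero_iff : ∀ a ∈ dom, toFun a = 0 ↔ a = 0
  map_mul : ∀ a ∈ dom, ∀ b ∈ dom, toFun (a * b) = toFun a * toFun b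
  map_add_le_max : ∀ a ∈ dom, ∀ b ∈ dom, toFun (a + b) ≤ max (toFun a) (toFun b)

namespace PartialAbs

variable {F : Type*} [Field F]

instance : CoeFun (PartialAbs F) fun _ => F → ℝ := ⟨toFun⟩

attribute [coe] PartialAbs.toFun

variable (v : PartialAbs F)

def toAbv : AbsoluteValue v.dom ℝ where
  toFun a := v a
  map_mul' a b := v.map_mul a a.2 b b.2
  nonneg' a := v.nonneg a a.2
  eq_zero' a := (v.eq_zero_iff a a.2).trans (Subring.coe_eq_zero_iff _)
  add_le' a b := (v.map_add_le_max a a.2 b b.2).trans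
    (max_le_add_of_nonneg (v.nonneg a a.2) (v.nonneg b b.2))

theorem isNonarchimedean_toAbv : IsNonarchimedean v.toAbv := fun a b =>
  v.map_add_le_max a a.2 b b.2

theorem map_one : v 1 = 1 := v.toAbv.map_one

theorem map_pow {a : F} (ha : a ∈ v.dom) (n : ℕ) : v (a ^ n) = v a ^ n :=
  v.toAbv.map_pow ⟨a, ha⟩ n

theorem map_neg {a : F} (ha : a ∈ v.dom) : v (-a) = v a := v.toAbv.map_neg ⟨a, ha⟩

theorem apply_ne_zero {a : F} (ha : a ∈ v.dom) (ha0 : a ≠ 0) : v a ≠ 0 :=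
  (v.eq_zero_iff a ha).not.2 ha0

instance : Preorder (PartialAbs F) where
  le v w := v.dom ≤ w.dom ∧ ∀ a ∈ v.dom, w a = v a
  le_refl v := ⟨le_rfl, fun _ _ => rfl⟩
  le_trans u v w huv hvw :=
    ⟨huv.1.trans hvw.1, fun a ha => (hvw.2 a (huv.1 ha)).trans (huv.2 a ha)⟩

section ofInjective

variable {A : Type*} [CommRing A] (f : A →+* F) (hf : Function.Injective f)
  (abv : AbsoluteValue A ℝ) (hna : IsNonarchimedean abv)

noncomputable def ofInjective : PartialAbs F where
  dom := f.range
  toFun := abv ∘ Function.invFun f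
  nonneg := by
    rintro _ ⟨a, rfl⟩
    exact abv.nonneg _
  eq_zero_iff := by
    rintro _ ⟨a, rfl⟩
    simp [Function.leftInverse_invFun hf a, map_eq_zero_iff f hf]
  map_mul := by
    rintro _ ⟨a, rfl⟩ _ ⟨b, rfl⟩
    simp only [Function.comp_apply, ← _root_.map_mul f, Function.leftInverse_invFun hf _]
    exact _root_.map_mul abv a b
  map_add_le_max := by
    rintro _ ⟨a, rfl⟩ _ ⟨b, rfl⟩
    simpa [← map_add, Function.leftInverse_invFun hf _] using hna a b

theorem ofInjective_apply (a : A) : ofInjective f hf abv hna (f a) = abv a :=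
  congrArg abv (Function.leftInverse_invFun hf a)

theorem mem_ofInjective_dom (a : A) : f a ∈ (ofInjective f hf abv hna).dom := ⟨a, rfl⟩

end ofInjective

section Chain

variable {c : Set (PartialAbs F)}

open Classical in
noncomputable def chainFun (c : Set (PartialAbs F)) (a : F) : ℝ :=
  if h : ∃ w ∈ c, a ∈ w.dom then h.choose a else 0

theorem chainFun_eq (hc : IsChain (· ≤ ·) c) {w : PartialAbs F} (hw : w ∈ c) {a : F}
    (ha : a ∈ w.dom) : chainFun c a = w a := by
  have h : ∃ w ∈ c, a ∈ w.dom := ⟨w, hw, ha⟩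
  obtain ⟨hw', ha'⟩ := h.choose_spec
  rw [chainFun, dif_pos h]
  rcases hc.total hw' hw with hle | hle
  · exact (hle.2 a ha').symm
  · exact hle.2 a ha

theorem mem_sSup_dom (hc : IsChain (· ≤ ·) c) (hne : c.Nonempty) {a : F} :
    a ∈ sSup (dom '' c) ↔ ∃ w ∈ c, a ∈ w.dom := by
  rw [Subring.mem_sSup_of_directedOn (hne.image _)
    ((hc.image_of_map_rel _ _ dom fun _ _ h => h.1).directedOn)]
  simp

theorem exists_mem_dom_of_mem_sSup (hc : IsChain (· ≤ ·) c) (hne : c.Nonempty) {a b : F}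
    (ha : a ∈ sSup (dom '' c)) (hb : b ∈ sSup (dom '' c)) :
    ∃ w ∈ c, a ∈ w.dom ∧ b ∈ w.dom := by
  obtain ⟨u, hu, ha⟩ := (mem_sSup_dom hc hne).1 ha
  obtain ⟨w, hw, hb⟩ := (mem_sSup_dom hc hne).1 hb
  rcases hc.total hu hw with h | h
  · exact ⟨w, hw, h.1 ha, hb⟩
  · exact ⟨u, hu, ha, h.1 hb⟩

noncomputable def ofChain (hc : IsChain (· ≤ ·) c) (hne : c.Nonempty) : PartialAbs F where
  dom := sSup (dom '' c)
  toFun := chainFun c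
  nonneg a ha := by
    obtain ⟨w, hw, ha⟩ := (mem_sSup_dom hc hne).1 ha
    rw [chainFun_eq hc hw ha]
    exact w.nonneg a ha
  eq_zero_iff a ha := by
    obtain ⟨w, hw, ha⟩ := (mem_sSup_dom hc hne).1 ha
    rw [chainFun_eq hc hw ha]
    exact w.eq_zero_iff a ha
  map_mul a ha b hb := by
    obtain ⟨w, hw, ha, hb⟩ := exists_mem_dom_of_mem_sSup hc hne ha hb
    rw [chainFun_eq hc hw ha, chainFun_eq hc hw hb, chainFun_eq hc hw (w.dom.mul_mem ha hb)]
    exact w.map_mul a ha b hb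
  map_add_le_max a ha b hb := by
    obtain ⟨w, hw, ha, hb⟩ := exists_mem_dom_of_mem_sSup hc hne ha hb
    rw [chainFun_eq hc hw ha, chainFun_eq hc hw hb, chainFun_eq hc hw (w.dom.add_mem ha hb)]
    exact w.map_add_le_max a ha b hb

theorem le_ofChain (hc : IsChain (· ≤ ·) c) (hne : c.Nonempty) {w : PartialAbs F}
    (hw : w ∈ c) : w ≤ ofChain hc hne :=
  ⟨fun _ ha => (mem_sSup_dom hc hne).2 ⟨w, hw, ha⟩, fun _ ha => chainFun_eq hc hw ha⟩

end Chain

theorem exists_le_isMax (v : PartialAbs F) : ∃ m, v ≤ m ∧ IsMax m :=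
  zorn_le_nonempty_Ici₀ v
    (fun _ _ hc w hw => ⟨ofChain hc ⟨w, hw⟩, fun _ => le_ofChain hc _⟩) v le_rfl

section Frac

def fracDom : Subring F where
  carrier := {x | ∃ d ∈ v.dom, d ≠ 0 ∧ x * d ∈ v.dom}
  mul_mem' := by
    rintro x y ⟨d, hd, hd0, hxd⟩ ⟨e, he, he0, hye⟩
    refine ⟨d * e, v.dom.mul_mem hd he, mul_ne_zero hd0 he0, ?_⟩
    rw [mul_mul_mul_comm]
    exact v.dom.mul_mem hxd hye
  one_mem' := ⟨1, v.dom.one_mem, one_ne_zero, by simp⟩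
  add_mem' := by
    rintro x y ⟨d, hd, hd0, hxd⟩ ⟨e, he, he0, hye⟩
    refine ⟨d * e, v.dom.mul_mem hd he, mul_ne_zero hd0 he0, ?_⟩
    rw [show (x + y) * (d * e) = x * d * e + y * e * d by ring]
    exact v.dom.add_mem (v.dom.mul_mem hxd he) (v.dom.mul_mem hye hd)
  zero_mem' := ⟨1, v.dom.one_mem, one_ne_zero, by simp⟩
  neg_mem' := by
    rintro x ⟨d, hd, hd0, hxd⟩
    exact ⟨d, hd, hd0, by simpa using v.dom.neg_mem hxd⟩

open Classical in
noncomputable def fracFun (x : F) : ℝ :=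
  if h : ∃ d ∈ v.dom, d ≠ 0 ∧ x * d ∈ v.dom then v (x * h.choose) / v h.choose else 0

theorem fracFun_eq {x d : F} (hd : d ∈ v.dom) (hd0 : d ≠ 0) (hxd : x * d ∈ v.dom) :
    v.fracFun x = v (x * d) / v d := by
  have h : ∃ d ∈ v.dom, d ≠ 0 ∧ x * d ∈ v.dom := ⟨d, hd, hd0, hxd⟩
  obtain ⟨he, he0, hxe⟩ := h.choose_spec
  rw [fracFun, dif_pos h, div_eq_div_iff (v.apply_ne_zero he he0) (v.apply_ne_zero hd hd0),
    ← v.map_mul _ hxe _ hd, ← v.map_mul _ hxd _ he, mul_right_comm, mul_right_comm x d]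

noncomputable def fracExt : PartialAbs F where
  dom := v.fracDom
  toFun := v.fracFun
  nonneg := by
    rintro x ⟨d, hd, hd0, hxd⟩
    rw [v.fracFun_eq hd hd0 hxd]
    exact div_nonneg (v.nonneg _ hxd) (v.nonneg _ hd)
  eq_zero_iff := by
    rintro x ⟨d, hd, hd0, hxd⟩
    rw [v.fracFun_eq hd hd0 hxd, div_eq_zero_iff, v.eq_zero_iff _ hxd, v.eq_zero_iff _ hd]
    simp [hd0]
  map_mul := by
    rintro x ⟨d, hd, hd0, hxd⟩ y ⟨e, he, he0, hye⟩
    have hxyde : x * y * (d * e) = x * d * (y * e) := by ring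
    rw [v.fracFun_eq (v.dom.mul_mem hd he) (mul_ne_zero hd0 he0)
      (hxyde ▸ v.dom.mul_mem hxd hye), v.fracFun_eq hd hd0 hxd, v.fracFun_eq he he0 hye, hxyde,
      v.map_mul _ hxd _ hye, v.map_mul _ hd _ he, mul_div_mul_comm]
  map_add_le_max := by
    rintro x ⟨d, hd, hd0, hxd⟩ y ⟨e, he, he0, hye⟩
    have hxyde : (x + y) * (d * e) = x * d * e + y * e * d := by ring
    have hxde := v.dom.mul_mem hxd he
    have hyed := v.dom.mul_mem hye hd
    have hvd := (v.nonneg d hd).lt_of_ne' (v.apply_ne_zero hd hd0)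
    have hve := (v.nonneg e he).lt_of_ne' (v.apply_ne_zero he he0)
    rw [v.fracFun_eq (v.dom.mul_mem hd he) (mul_ne_zero hd0 he0)
      (hxyde ▸ v.dom.add_mem hxde hyed), v.fracFun_eq hd hd0 hxd, v.fracFun_eq he he0 hye,
      v.map_mul _ hd _ he, div_le_iff₀ (mul_pos hvd hve), max_mul_of_nonneg _ _ (by positivity),
      hxyde]
    refine (v.map_add_le_max _ hxde _ hyed).trans (max_le_max (le_of_eq ?_) (le_of_eq ?_))
    · rw [v.map_mul _ hxd _ he]
      field_simp
    · rw [v.map_mul _ hye _ hd]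
      field_simp

theorem le_fracExt : v ≤ v.fracExt := by
  refine ⟨fun a ha => ⟨1, v.dom.one_mem, one_ne_zero, by simpa using ha⟩, fun a ha => ?_⟩
  change v.fracFun a = v a
  rw [v.fracFun_eq v.dom.one_mem one_ne_zero (by simpa using ha), mul_one, v.map_one, div_one]

theorem inv_mem_fracExt {a : F} (ha : a ∈ v.dom) (ha0 : a ≠ 0) : a⁻¹ ∈ v.fracExt.dom :=
  ⟨a, ha, ha0, by simp [ha0]⟩

theorem inv_mem_of_isMax {m : PartialAbs F} (hm : IsMax m) {a : F} (ha : a ∈ m.dom)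
    (ha0 : a ≠ 0) : a⁻¹ ∈ m.dom :=
  (hm m.le_fracExt).1 (m.inv_mem_fracExt ha ha0)

end Frac

section Gauss

noncomputable def gaussExt {t : F} (ht : Transcendental v.dom t) : PartialAbs F :=
  ofInjective (aeval t).toRingHom (transcendental_iff_injective.1 ht)
    (v.toAbv.gaussNorm v.isNonarchimedean_toAbv one_pos)
    (v.toAbv.isNonarchimedean_gaussNorm v.isNonarchimedean_toAbv one_pos)

theorem le_gaussExt {t : F} (ht : Transcendental v.dom t) : v ≤ v.gaussExt ht := by
  have hC (a : F) (ha : a ∈ v.dom) : aeval t (C (⟨a, ha⟩ : v.dom)) = a := by rw [aeval_C]; rfl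
  refine ⟨fun a ha => ⟨C ⟨a, ha⟩, hC a ha⟩, fun a ha => ?_⟩
  calc v.gaussExt ht a = v.gaussExt ht (aeval t (C (⟨a, ha⟩ : v.dom))) := by rw [hC]
    _ = v a := (ofInjective_apply _ _ _ _ _).trans (gaussNorm_C _ _ _)

theorem mem_gaussExt_dom {t : F} (ht : Transcendental v.dom t) : t ∈ (v.gaussExt ht).dom :=
  ⟨X, by simp⟩

theorem isAlgebraic_of_isMax {m : PartialAbs F} (hm : IsMax m) (x : F) : IsAlgebraic m.dom x := by
  by_contra hx
  have hxm : x ∈ m.dom := (hm (m.le_gaussExt hx)).1 (m.mem_gaussExt_dom hx)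
  exact hx (isAlgebraic_algebraMap (⟨x, hxm⟩ : m.dom))

theorem isIntegral_of_isMax {m : PartialAbs F} (hm : IsMax m) (x : F) : IsIntegral m.dom x := by
  obtain ⟨y, hy0, hy⟩ := (isAlgebraic_of_isMax hm x).exists_integral_multiple
  have hy0' : (y : F) ≠ 0 := by simpa using hy0
  convert hy.smul (⟨(y : F)⁻¹, inv_mem_of_isMax hm y.2 hy0'⟩ : m.dom) using 1
  simp [Subring.smul_def, hy0']

end Gauss

def integers : Subring F where
  carrier := {a | a ∈ v.dom ∧ v a ≤ 1}
  mul_mem' {a b} ha hb := ⟨v.dom.mul_mem ha.1 hb.1, by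
    rw [v.map_mul _ ha.1 _ hb.1]
    exact mul_le_one₀ ha.2 (v.nonneg _ hb.1) hb.2⟩
  one_mem' := ⟨v.dom.one_mem, v.map_one.le⟩
  add_mem' {a b} ha hb := ⟨v.dom.add_mem ha.1 hb.1,
    (v.map_add_le_max _ ha.1 _ hb.1).trans (max_le ha.2 hb.2)⟩
  zero_mem' := ⟨v.dom.zero_mem, ((v.eq_zero_iff 0 v.dom.zero_mem).2 rfl).trans_le zero_le_one⟩
  neg_mem' {a} ha := ⟨v.dom.neg_mem ha.1, (v.map_neg ha.1).trans_le ha.2⟩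

theorem exists_isIntegral_integers_mul_pow {x s : F} (hx : IsIntegral v.dom x) (hs : s ∈ v.dom)
    (hs1 : v s < 1) : ∃ k, IsIntegral v.integers (x * s ^ k) := by
  obtain ⟨p, hp, hpD, hpx⟩ := (Subring.isIntegral_iff_exists_monic_coeff_mem _).1 hx
  obtain ⟨k, hk⟩ :
      ∃ k, ∀ i ∈ Finset.range p.natDegree, v (p.coeff i) * v s ^ k ≤ 1 := by
    refine ((Filter.eventually_all_finset (l := Filter.atTop) _).2 fun i _ => ?_).exists
    have := (tendsto_pow_atTop_nhds_zero_of_lt_one (v.nonneg s hs) hs1).const_mul (v (p.coeff i))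
    rw [mul_zero] at this
    exact this.eventually (eventually_le_nhds one_pos)
  have hsk := v.dom.pow_mem hs k
  refine ⟨k, (Subring.isIntegral_iff_exists_monic_coeff_mem _).2
    ⟨p.scaleRoots (s ^ k), (monic_scaleRoots_iff _).2 hp, fun i => ?_, ?_⟩⟩
  · rw [coeff_scaleRoots]
    rcases lt_trichotomy i p.natDegree with hi | rfl | hi
    · refine ⟨v.dom.mul_mem (hpD i) (v.dom.pow_mem hsk _), ?_⟩
      rw [v.map_mul _ (hpD i) _ (v.dom.pow_mem hsk _), v.map_pow hsk, v.map_pow hs, ← pow_mul]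
      calc v (p.coeff i) * v s ^ (k * (p.natDegree - i)) ≤ v (p.coeff i) * v s ^ k :=
            mul_le_mul_of_nonneg_left (pow_le_pow_of_le_one (v.nonneg s hs) hs1.le
              (Nat.le_mul_of_pos_right k (by omega))) (v.nonneg _ (hpD i))
        _ ≤ 1 := hk i (Finset.mem_range.2 hi)
    · simp [hp.coeff_natDegree]
    · simp [coeff_eq_zero_of_natDegree_lt hi]
  · rw [mul_comm, scaleRoots_eval_mul, hpx, mul_zero]

end PartialAbs

theorem submaximal_of_partialAbs {R F : Type*} [CommRing R] [Field F] (φ : R →+* F) {ξ η : R}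
    (hξη : ξ * η = 1) (v : PartialAbs F) (hη : φ η ∈ v.dom) (hv : v (φ η) < 1) :
    Submaximal R := by
  obtain ⟨m, hvm, hm⟩ := v.exists_le_isMax
  have hηm : φ η ∈ m.dom := hvm.1 hη
  have hm1 : m (φ η) < 1 := (hvm.2 _ hη).trans_lt hv
  have hφ : φ ξ * φ η = 1 := by rw [← map_mul, hξη, map_one]
  let T := (integralClosure m.integers F).toSubring.comap φ
  refine submaximal_of_closure_insert_eq_top T (x := ξ) (fun hξ => ?_) ?_
  · have hξO := Subring.mem_of_isIntegral_of_mul_eq_one_s7 hξ ⟨hηm, hm1.le⟩ hφ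
    have := m.map_mul _ hξO.1 _ hηm
    rw [hφ, m.map_one] at this
    -- `1 = m (φ ξ) * m (φ η) ≤ m (φ η) < 1`
    nlinarith [hξO.2, m.nonneg _ hηm]
  · rw [eq_top_iff]
    rintro r -
    obtain ⟨k, hk⟩ :=
      m.exists_isIntegral_integers_mul_pow (m.isIntegral_of_isMax hm (φ r)) hηm hm1
    have hr : r = r * η ^ k * ξ ^ k := by
      rw [mul_assoc, ← mul_pow, mul_comm η, hξη, one_pow, mul_one]
    have hrT : r * η ^ k ∈ T := by simpa [T, mem_integralClosure_iff] using hk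
    rw [hr]
    exact mul_mem (Subring.subset_closure (Set.mem_insert_of_mem _ hrT))
      (pow_mem (Subring.subset_closure (Set.mem_insert _ _)) _)

theorem submaximal_of_not_isUnit_of_isUnit {R : Type*} [CommRing R] [IsDomain R] (D : Subring R)
    [IsDedekindDomain D] {d : D} (hd : ¬IsUnit d) (hdR : IsUnit (d : R)) : Submaximal R := by
  obtain ⟨ξ, hξ⟩ := hdR.exists_left_inv
  have hd0 : d ≠ 0 := by
    rintro rfl
    simp at hdR
  obtain ⟨M, hM, hdM⟩ :=
    Ideal.exists_le_maximal (Ideal.span {d}) (Ideal.span_singleton_ne_top hd)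
  have hdM : d ∈ M := hdM (Ideal.mem_span_singleton_self d)
  let P : IsDedekindDomain.HeightOneSpectrum D :=
    ⟨M, hM.isPrime, fun h => hd0 (by simpa [h] using hdM)⟩
  have hb : (1 : ℝ≥0) < 2 := one_lt_two
  let φ := algebraMap R (FractionRing R)
  have hf : Function.Injective (φ.comp D.subtype) :=
    (IsFractionRing.injective R _).comp Subtype.val_injective
  refine submaximal_of_partialAbs φ hξ (.ofInjective _ hf _ (P.isNonarchimedean_intAdicAbv hb))
    (PartialAbs.mem_ofInjective_dom _ _ _ _ d) ?_
  rw [show φ d = (φ.comp D.subtype) d from rfl, PartialAbs.ofInjective_apply,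
    P.intAdicAbv_lt_one_iff]
  exact hdM

theorem submaximal_of_isUnit_of_transcendental {R : Type*} [CommRing R] [IsDomain R]
    (D : Subring R) {x : R} (hx : IsUnit x) (hxD : Transcendental D x) : Submaximal R := by
  classical
  obtain ⟨ξ, hξ⟩ := hx.exists_left_inv
  let φ := algebraMap R (FractionRing R)
  let f := φ.comp (aeval (R := D) x).toRingHom
  have hf : Function.Injective f :=
    (IsFractionRing.injective R _).comp (transcendental_iff_injective.1 hxD)
  have hna := AbsoluteValue.isNonarchimedean_trivial (A := D)
  have hc : (0 : ℝ) < 1 / 2 := by norm_num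
  have hfX : f X = φ x := by simp [f]
  refine submaximal_of_partialAbs φ hξ (.ofInjective f hf _
    (AbsoluteValue.trivial.isNonarchimedean_gaussNorm hna hc)) (hfX ▸ PartialAbs.mem_ofInjective_dom _ _ _ _ X) ?_
  rw [← hfX, PartialAbs.ofInjective_apply, AbsoluteValue.gaussNorm_apply,
    ← monomial_one_one_eq_X, gaussNorm_monomial]
  norm_num

theorem exists_not_isUnit_isUnit_coe_of_isAlgebraic {R : Type*} [CommRing R] [IsDomain R]
    (D : Subring R) [IsPrincipalIdealRing D] (hD : ∀ y : R, IsIntegral D y → y ∈ D) {x : R}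
    (hx : IsAlgebraic D x) (hxD : x ∉ D) : ∃ d : D, ¬IsUnit d ∧ IsUnit (d : R) := by
  obtain ⟨a, ha0, ha⟩ := hx.exists_integral_multiple
  have hax : (a : R) * x ∈ D := hD _ (by simpa [Subring.smul_def] using ha)
  obtain ⟨e, d, c, hed, hce, hcd⟩ :=
    UniqueFactorizationMonoid.exists_reduced_factors' (⟨_, hax⟩ : D) a ha0
  obtain ⟨α, β, hαβ⟩ := hed.isCoprime
  have hc0 : (c : R) ≠ 0 := by
    rintro hc
    exact ha0 (by rw [← hcd, (Subring.coe_eq_zero_iff _).1 hc, zero_mul])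
  -- `x = e / d` in lowest terms, so `d⁻¹ = α x + β` lies in `R`
  have hdx : (d : R) * x = e := by
    refine mul_left_cancel₀ hc0 ?_
    rw [← mul_assoc, ← Subring.coe_mul, hcd, ← Subring.coe_mul, hce]
  refine ⟨d, fun hu => hxD ?_, .of_mul_eq_one (α * x + β) ?_⟩
  · obtain ⟨u, hu⟩ := hu.exists_left_inv
    have : x = (u * e : D) := by
      rw [Subring.coe_mul, ← hdx, ← mul_assoc, ← Subring.coe_mul, hu, Subring.coe_one,
        one_mul]
    exact this ▸ (u * e).2
  · have := congrArg ((↑) : D → R) hαβ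
    push_cast at this
    linear_combination this + α * hdx

theorem stmt7_general {R : Type*} [CommRing R] [IsDomain R] (D : Subring R)
    [IsPrincipalIdealRing D]
    (hic : ∀ x : R, (∃ p : Polynomial R, p.Monic ∧ (∀ i, p.coeff i ∈ D) ∧ p.eval x = 0) → x ∈ D)
    (hU : ∃ x : R, IsUnit x ∧ ¬ (x ∈ D ∧ ∃ y ∈ D, x * y = 1)) :
    Submaximal R := by
  have hD (y : R) (hy : IsIntegral D y) : y ∈ D :=
    hic y ((Subring.isIntegral_iff_exists_monic_coeff_mem D).1 hy)
  obtain ⟨x, hx, hxD⟩ := hU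
  by_cases hxmem : x ∈ D
  · refine submaximal_of_not_isUnit_of_isUnit D (d := ⟨x, hxmem⟩)
      (fun hu => hxD ⟨hxmem, ?_⟩) hx
    obtain ⟨y, hy⟩ := hu.exists_right_inv
    exact ⟨y, y.2, congrArg Subtype.val hy⟩
  by_cases halg : IsAlgebraic D x
  · obtain ⟨d, hd, hdR⟩ := exists_not_isUnit_isUnit_coe_of_isAlgebraic D hD halg hxmem
    exact submaximal_of_not_isUnit_of_isUnit D hd hdR
  · exact submaximal_of_isUnit_of_transcendental D hx halg

theorem stmt7 {R : Type*} [CommRing R] [IsDomain R] (D : Subring R)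
    [IsDomain D] [IsPrincipalIdealRing D]
    (hic : ∀ x : R, (∃ p : Polynomial R, p.Monic ∧ (∀ i, p.coeff i ∈ D) ∧ p.eval x = 0) → x ∈ D)
    (hU : ∃ x : R, IsUnit x ∧ ¬ (x ∈ D ∧ ∃ y ∈ D, x * y = 1)) :
    Submaximal R :=
  stmt7_general D hic hU
end

section
/- Let R be a commutative ring of characteristic zero with J(R) ≠ 0 which is not submaximal. Then for every x ∈ J(R) and every polynomial f ∈ ℤ[t] with f(x) = 0 we have f(0) = 0. In particular every element of J(R) is a zero divisor. -/
/-!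
If `u` is a unit of `R` and `S` a subring with `u⁻¹ ∉ S` such that every `r` has some `u ^ k * r`
in `S`, then a subring maximal (by Zorn) among those containing `S` and avoiding `u⁻¹` is a maximal
subring. Such an `S` is the preimage, under a map `ρ : R →+* K` to a field, of a subring `T` of `K`
with the same property for `π = ρ u`, and `T` exists as soon as `K` contains a discrete valuation
ring with uniformizer `π`: by Zorn, and Gauss's lemma to adjoin transcendental elements, enlarge it
until `K` is algebraic over it, and let `T` be its integral closure. Then `π` is still not a unit
in `T` (lying over), and `π ^ k * x ∈ T` once `π ^ k` is the `π`-part of the leading coefficient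
of a polynomial killing `x`.

If `R` is not submaximal, a nonzero integer `c ∈ J(R)` is impossible: `1 + c²` would be an
invertible integer `> 1`, and `ℤ_(q)` for a prime `q ∣ 1 + c²` is such a valuation ring. Hence
`f(x) = 0` with `x ∈ J(R)` forces `f(0) ∈ J(R) ∩ ℤ = 0`. If moreover `x` were regular, stripping
powers of `X` would show that `x`, hence the unit `1 + x`, is transcendental over `ℤ`; for a map
`ρ` keeping `π = ρ (1 + x)` transcendental, `ℤ[π]` localized at `(π)` is such a valuation ring.
-/

open Polynomial

universe u

section Saturated

variable {R : Type*} [CommRing R]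

theorem Submaximal.of_saturated (u : Rˣ) (S : Subring R) (hS : (↑u⁻¹ : R) ∉ S)
    (hsat : ∀ r : R, ∃ k : ℕ, (u : R) ^ k * r ∈ S) : Submaximal R := by
  obtain ⟨M, hSM, hM⟩ := zorn_le_nonempty₀ {T : Subring R | (↑u⁻¹ : R) ∉ T}
    (fun c hc hchain T hT => ⟨sSup c, fun h => by
      obtain ⟨T', hT', h'⟩ := (Subring.mem_sSup_of_directedOn ⟨T, hT⟩ hchain.directedOn).mp h
      exact hc hT' h', fun _ => le_sSup⟩) S hS
  refine ⟨M, fun htop => hM.prop (htop ▸ Subring.mem_top _), fun T hMT => ?_⟩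
  have huT : (↑u⁻¹ : R) ∈ T := by_contra fun h => hMT.not_ge (hM.2 h hMT.le)
  refine eq_top_iff.mpr fun r _ => ?_
  obtain ⟨k, hk⟩ := hsat r
  have hr : r = (↑u⁻¹ : R) ^ k * ((u : R) ^ k * r) := by
    rw [← mul_assoc, ← mul_pow, Units.inv_mul, one_pow, one_mul]
  rw [hr]
  exact T.mul_mem (T.pow_mem huT k) (hMT.le (hSM hk))

end Saturated

section Uniformizer

variable {K : Type*} [Field K]

/-- `exists_pow` says that every nonzero `a ∈ V` is `π ^ k` times a unit of `V`. -/
structure IsDVRWithUniformizer (V : Subring K) (π : K) : Prop where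
  mem : π ∈ V
  inv_notMem : π⁻¹ ∉ V
  exists_pow : ∀ a ∈ V, a ≠ 0 → ∃ k : ℕ, a / π ^ k ∈ V ∧ π ^ k / a ∈ V

namespace IsDVRWithUniformizer

variable {V : Subring K} {π : K}

theorem ne_zero (hV : IsDVRWithUniformizer V π) : π ≠ 0 := by
  rintro rfl
  exact hV.inv_notMem (by rw [inv_zero]; exact V.zero_mem)

def uniformizer (hV : IsDVRWithUniformizer V π) : V := ⟨π, hV.mem⟩

theorem inv_mem_of_not_dvd (hV : IsDVRWithUniformizer V π) {a : V} (ha : a ≠ 0)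
    (hdvd : ¬ hV.uniformizer ∣ a) : (a : K)⁻¹ ∈ V := by
  have ha' : (a : K) ≠ 0 := by simpa using ha
  obtain ⟨k, ha_div, hdiv_a⟩ := hV.exists_pow a a.2 ha'
  cases k with
  | zero => simpa using hdiv_a
  | succ k =>
    refine absurd ⟨⟨π ^ k * (a / π ^ (k + 1)), V.mul_mem (V.pow_mem hV.mem k) ha_div⟩,
      Subtype.ext ?_⟩ hdvd
    simp only [uniformizer, MulMemClass.coe_mul]
    field_simp [hV.ne_zero]
    ring

theorem prime (hV : IsDVRWithUniformizer V π) : Prime hV.uniformizer := by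
  refine ⟨fun h => hV.ne_zero (congrArg Subtype.val h), fun hunit => ?_, fun a b hab => ?_⟩
  · obtain ⟨v, hv⟩ := isUnit_iff_exists_inv.mp hunit
    have hπv : π * v = 1 := by simpa [uniformizer] using congrArg Subtype.val hv
    exact hV.inv_notMem (eq_inv_of_mul_eq_one_right hπv ▸ v.2)
  by_contra! hndvd
  have ha : a ≠ 0 := by rintro rfl; exact hndvd.1 (dvd_zero _)
  have hb : b ≠ 0 := by rintro rfl; exact hndvd.2 (dvd_zero _)
  obtain ⟨c, hc⟩ := hab
  have hπinv : π⁻¹ = c * ((a : K)⁻¹ * (b : K)⁻¹) := by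
    have hc' : (a : K) * b = π * c := congrArg Subtype.val hc
    have : (a : K) ≠ 0 := by simpa using ha
    have : (b : K) ≠ 0 := by simpa using hb
    field_simp [hV.ne_zero]
    rw [hc']
  exact hV.inv_notMem (hπinv ▸ V.mul_mem c.2
    (V.mul_mem (hV.inv_mem_of_not_dvd ha hndvd.1) (hV.inv_mem_of_not_dvd hb hndvd.2)))

theorem finiteMultiplicity (hV : IsDVRWithUniformizer V π) {a : V} (ha : a ≠ 0) :
    FiniteMultiplicity hV.uniformizer a := by
  have ha' : (a : K) ≠ 0 := by simpa using ha
  obtain ⟨k, -, hdiv_a⟩ := hV.exists_pow a a.2 ha'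
  refine ⟨k, fun ⟨b, hb⟩ => hV.inv_notMem ?_⟩
  have hb' : (a : K) = π ^ (k + 1) * b := congrArg Subtype.val hb
  have : π⁻¹ = b * (π ^ k / a) := by
    rw [hb']
    have : (b : K) ≠ 0 := by rintro h; rw [h, mul_zero] at hb'; exact ha' hb'
    field_simp [hV.ne_zero]
    ring
  exact this ▸ V.mul_mem b.2 hdiv_a

theorem finiteMultiplicity_C (hV : IsDVRWithUniformizer V π) {P : V[X]} (hP : P ≠ 0) :
    FiniteMultiplicity (C hV.uniformizer) P := by
  obtain ⟨n, hn⟩ := hV.finiteMultiplicity (leadingCoeff_ne_zero.mpr hP)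
  refine ⟨n, fun h => hn ?_⟩
  rw [← C_pow, C_dvd_iff_dvd_coeff] at h
  exact h _

end IsDVRWithUniformizer

end Uniformizer

section Localization

variable {A K : Type*} [CommRing A] [Field K]

/-- The image of the localization `M⁻¹A` in `K`. -/
def localizationRange (φ : A →+* K) (M : Submonoid A) : Subring K where
  carrier := {y | ∃ a, ∃ b ∈ M, y * φ b = φ a}
  mul_mem' := by
    rintro _ _ ⟨a, b, hb, h⟩ ⟨a', b', hb', h'⟩
    exact ⟨a * a', b * b', M.mul_mem hb hb', by rw [map_mul, map_mul, ← h, ← h']; ring⟩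
  one_mem' := ⟨1, 1, M.one_mem, by simp⟩
  add_mem' := by
    rintro _ _ ⟨a, b, hb, h⟩ ⟨a', b', hb', h'⟩
    exact ⟨a * b' + a' * b, b * b', M.mul_mem hb hb', by
      simp only [map_mul, map_add]; rw [← h, ← h']; ring⟩
  zero_mem' := ⟨0, 1, M.one_mem, by simp⟩
  neg_mem' := by
    rintro _ ⟨a, b, hb, h⟩
    exact ⟨-a, b, hb, by rw [map_neg, ← h]; ring⟩

theorem apply_mem_localizationRange (φ : A →+* K) (M : Submonoid A) (a : A) :
    φ a ∈ localizationRange φ M :=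
  ⟨a, 1, M.one_mem, by simp⟩

theorem isDVRWithUniformizer_localizationRange {φ : A →+* K} (hφ : Function.Injective φ)
    {p : A} (hp : p ≠ 0) [(Ideal.span {p}).IsPrime]
    (hfin : ∀ a ≠ 0, FiniteMultiplicity p a) :
    IsDVRWithUniformizer (localizationRange φ (Ideal.span {p}).primeCompl) (φ p) := by
  have hφp : φ p ≠ 0 := (map_ne_zero_iff φ hφ).mpr hp
  have hφb : ∀ b ∈ (Ideal.span {p}).primeCompl, φ b ≠ 0 := fun b hb h0 =>
    hb ((map_eq_zero_iff φ hφ).mp h0 ▸ Ideal.zero_mem _)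
  refine ⟨apply_mem_localizationRange φ _ p, ?_, ?_⟩
  · rintro ⟨a, b, hb, h⟩
    refine hb (Ideal.mem_span_singleton'.mpr ⟨a, hφ ?_⟩)
    rw [map_mul, ← h]
    field_simp
  · rintro y ⟨a, b, hb, h⟩ hy
    have ha : a ≠ 0 := by
      rintro rfl
      rw [map_zero] at h
      exact mul_ne_zero hy (hφb b hb) h
    obtain ⟨c, hac, hc⟩ := (hfin a ha).exists_eq_pow_mul_and_not_dvd
    have hc' : c ∈ (Ideal.span {p}).primeCompl := fun h => hc (Ideal.mem_span_singleton.mp h)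
    rw [hac, map_mul, map_pow] at h
    refine ⟨multiplicity p a, ⟨c, b, hb, ?_⟩, ⟨b, c, hc', ?_⟩⟩
    · field_simp
      linear_combination h
    · have := hφb c hc'
      field_simp
      linear_combination -h

end Localization

section IntegralClosure

variable {K : Type*} [Field K] {π : K}

namespace IsDVRWithUniformizer

variable {V : Subring K}

theorem exists_le_of_transcendental (hV : IsDVRWithUniformizer V π) {x : K}
    (hx : Transcendental V x) : ∃ V', V ≤ V' ∧ IsDVRWithUniformizer V' π ∧ x ∈ V' := by
  have hC : C hV.uniformizer ≠ 0 := C_ne_zero.mpr fun h => hV.ne_zero (congrArg Subtype.val h)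
  have := (Ideal.span_singleton_prime hC).mpr (prime_C_iff.mpr hV.prime)
  refine ⟨localizationRange (aeval (R := V) x).toRingHom
    (Ideal.span {C hV.uniformizer}).primeCompl, fun a ha => ?_, ?_, ?_⟩
  · simpa [Algebra.algebraMap_ofSubsemiring_apply] using
      apply_mem_localizationRange (aeval (R := V) x).toRingHom _ (C ⟨a, ha⟩)
  · simpa [uniformizer, Algebra.algebraMap_ofSubsemiring_apply] using
      isDVRWithUniformizer_localizationRange
      (transcendental_iff_injective.mp hx) hC fun P hP => hV.finiteMultiplicity_C hP
  · simpa using apply_mem_localizationRange (aeval (R := V) x).toRingHom _ X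

theorem sSup_of_directedOn {c : Set (Subring K)} (hne : c.Nonempty) (hc : DirectedOn (· ≤ ·) c)
    (hV : ∀ V ∈ c, IsDVRWithUniformizer V π) : IsDVRWithUniformizer (sSup c) π := by
  obtain ⟨V, hVc⟩ := hne
  refine ⟨le_sSup hVc (hV V hVc).mem, fun h => ?_, fun a ha ha0 => ?_⟩
  · obtain ⟨W, hW, h⟩ := (Subring.mem_sSup_of_directedOn ⟨V, hVc⟩ hc).mp h
    exact (hV W hW).inv_notMem h
  · obtain ⟨W, hW, ha⟩ := (Subring.mem_sSup_of_directedOn ⟨V, hVc⟩ hc).mp ha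
    obtain ⟨k, h1, h2⟩ := (hV W hW).exists_pow a ha ha0
    exact ⟨k, le_sSup hW h1, le_sSup hW h2⟩

theorem exists_isAlgebraic (hV : IsDVRWithUniformizer V π) :
    ∃ W : Subring K, IsDVRWithUniformizer W π ∧ ∀ x : K, IsAlgebraic W x := by
  obtain ⟨W, -, hW⟩ := zorn_le_nonempty₀ {W : Subring K | IsDVRWithUniformizer W π}
    (fun c hc hchain V hV => ⟨sSup c, sSup_of_directedOn ⟨V, hV⟩ hchain.directedOn hc,
      fun _ => le_sSup⟩) V hV
  refine ⟨W, hW.prop, fun x => by_contra fun hx => ?_⟩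
  obtain ⟨W', hWW', hW', hxW'⟩ := hW.prop.exists_le_of_transcendental hx
  exact hx (isAlgebraic_algebraMap (⟨x, hW.2 hW' hWW' hxW'⟩ : W))

end IsDVRWithUniformizer

theorem mem_of_isIntegral_of_mul_eq_one {W : Subring K} {u : K} (hπ : π ∈ W)
    (hu : IsIntegral W u) (h : π * u = 1) : u ∈ W := by
  have hspan : Ideal.span {(⟨π, hπ⟩ : W)} = ⊤ := by
    rw [← Ideal.map_eq_top_iff _ (FaithfulSMul.algebraMap_injective W (integralClosure W K))
      fun a => integralClosure.isIntegral a, Ideal.map_span, Set.image_singleton,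
      Ideal.span_singleton_eq_top, isUnit_iff_exists_inv]
    exact ⟨⟨u, hu⟩, Subtype.ext h⟩
  obtain ⟨v, hv⟩ := isUnit_iff_exists_inv.mp (Ideal.span_singleton_eq_top.mp hspan)
  have hπv : π * v = 1 := congrArg Subtype.val hv
  rw [← mul_left_cancel₀ (left_ne_zero_of_mul_eq_one h) (hπv.trans h.symm)]
  exact v.2

theorem IsDVRWithUniformizer.exists_saturated {V : Subring K}
    (hV : IsDVRWithUniformizer V π) :
    ∃ T : Subring K, π⁻¹ ∉ T ∧ ∀ x : K, ∃ k : ℕ, π ^ k * x ∈ T := by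
  obtain ⟨W, hW, halg⟩ := hV.exists_isAlgebraic
  refine ⟨(integralClosure W K).toSubring, fun h => hW.inv_notMem
    (mem_of_isIntegral_of_mul_eq_one hW.mem h (mul_inv_cancel₀ hW.ne_zero)), fun x => ?_⟩
  obtain ⟨p, hp0, hpx⟩ := halg x
  obtain ⟨k, -, hk⟩ := hW.exists_pow _ p.leadingCoeff.2 (by simpa using hp0)
  refine ⟨k, ?_⟩
  show IsIntegral W (π ^ k * x)
  have hlc : (p.leadingCoeff : K) ≠ 0 := by simpa using hp0
  have hx : π ^ k * x = algebraMap W K ⟨_, hk⟩ * (p.leadingCoeff • x) := by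
    rw [Algebra.smul_def, Algebra.algebraMap_ofSubsemiring_apply,
      Algebra.algebraMap_ofSubsemiring_apply]
    field_simp
  rw [hx]
  exact isIntegral_algebraMap.mul (isIntegral_leadingCoeff_smul p x hpx)

end IntegralClosure

theorem exists_ringHom_field_ne_zero {R : Type u} [CommRing R] (S : Submonoid R)
    (hS : (0 : R) ∉ S) : ∃ (K : Type u) (_ : Field K) (ρ : R →+* K), ∀ s ∈ S, ρ s ≠ 0 := by
  obtain ⟨p, hp, -, hdisj⟩ := Ideal.exists_le_prime_disjoint ⊥ S
    (Set.disjoint_left.mpr fun a ha => by rwa [show a = 0 from ha])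
  refine ⟨FractionRing (R ⧸ p), inferInstance,
    (algebraMap (R ⧸ p) _).comp (Ideal.Quotient.mk p), fun s hs h => ?_⟩
  rw [RingHom.comp_apply, IsFractionRing.to_map_eq_zero_iff,
    Ideal.Quotient.eq_zero_iff_mem] at h
  exact Set.disjoint_left.mp hdisj h hs

section Submaximal

variable {R : Type*} [CommRing R]

theorem Submaximal.of_isDVRWithUniformizer {K : Type*} [Field K] (ρ : R →+* K) (u : Rˣ)
    {V : Subring K} (hV : IsDVRWithUniformizer V (ρ u)) : Submaximal R := by
  obtain ⟨T, hT, hsat⟩ := hV.exists_saturated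
  refine Submaximal.of_saturated u (T.comap ρ) (by simpa [map_units_inv] using hT) fun r => ?_
  obtain ⟨k, hk⟩ := hsat (ρ r)
  exact ⟨k, by simpa using hk⟩

theorem Submaximal.of_isUnit_natCast [CharZero R] {n : ℕ} (hn : 1 < n) (hu : IsUnit (n : R)) :
    Submaximal R := by
  have hq : n.minFac.Prime := Nat.minFac_prime hn.ne'
  have hqu : IsUnit (n.minFac : R) := isUnit_of_dvd_unit (Nat.cast_dvd_cast n.minFac_dvd) hu
  obtain ⟨K, _, ρ, hρ⟩ := exists_ringHom_field_ne_zero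
    ((nonZeroDivisors ℤ).map (Int.castRingHom R)) (by
      rintro ⟨m, hm, hm0⟩
      exact nonZeroDivisors.ne_zero hm (by simpa using hm0))
  have hinj : Function.Injective (Int.castRingHom K) :=
    (injective_iff_map_eq_zero _).mpr fun m hm => by_contra fun h =>
      hρ _ ⟨m, mem_nonZeroDivisors_of_ne_zero h, rfl⟩ (by simpa using hm)
  have hq0 : (n.minFac : ℤ) ≠ 0 := by exact_mod_cast hq.ne_zero
  have := (Ideal.span_singleton_prime hq0).mpr (Nat.prime_iff_prime_int.mp hq)
  have hV := isDVRWithUniformizer_localizationRange hinj hq0 fun a ha =>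
    Int.finiteMultiplicity_iff.mpr ⟨by simpa using hq.ne_one, ha⟩
  exact Submaximal.of_isDVRWithUniformizer ρ hqu.unit (by simpa using hV)

theorem Submaximal.of_transcendental (u : Rˣ) (hu : Transcendental ℤ (u : R)) :
    Submaximal R := by
  obtain ⟨K, _, ρ, hρ⟩ := exists_ringHom_field_ne_zero
    ((nonZeroDivisors ℤ[X]).map (aeval (u : R))) (by
      rintro ⟨F, hF, hF0⟩
      exact nonZeroDivisors.ne_zero hF (transcendental_iff.mp hu F hF0))
  have hρu : Transcendental ℤ (ρ u) := transcendental_iff.mpr fun F hF => by_contra fun h =>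
    hρ _ ⟨F, mem_nonZeroDivisors_of_ne_zero h, rfl⟩
      (by simpa [hF] using (aeval_algHom_apply ρ.toIntAlgHom (u : R) F).symm)
  have := (Ideal.span_singleton_prime X_ne_zero).mpr (prime_X (R := ℤ))
  have hV := isDVRWithUniformizer_localizationRange (transcendental_iff_injective.mp hρu)
    X_ne_zero fun F hF => by simpa using finiteMultiplicity_X_sub_C 0 hF
  exact Submaximal.of_isDVRWithUniformizer ρ u (by simpa using hV)

end Submaximal

section Jacobson

variable {R : Type*} [CommRing R]

theorem eq_zero_of_intCast_mem_jacobson_bot [CharZero R] (h : ¬ Submaximal R) {c : ℤ}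
    (hc : (c : R) ∈ (⊥ : Ideal R).jacobson) : c = 0 := by
  by_contra hc0
  refine h (Submaximal.of_isUnit_natCast (n := c.natAbs ^ 2 + 1) ?_ ?_)
  · have := Int.natAbs_pos.mpr hc0
    nlinarith
  · convert Ideal.mem_jacobson_bot.mp hc c using 1
    rw [← Int.cast_natCast, Nat.cast_add, Nat.cast_pow, Int.natCast_natAbs, sq_abs]
    push_cast
    ring

theorem coeff_zero_eq_zero_of_aeval_eq_zero [CharZero R] (h : ¬ Submaximal R) {x : R}
    (hx : x ∈ (⊥ : Ideal R).jacobson) {f : ℤ[X]} (hf : aeval x f = 0) : f.coeff 0 = 0 := by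
  refine eq_zero_of_intCast_mem_jacobson_bot h ?_
  obtain ⟨g, hg⟩ := X_dvd_iff.mpr (show (f - C (f.coeff 0)).coeff 0 = 0 by simp)
  have hc : (f.coeff 0 : R) = -(x * aeval x g) := by
    have := congrArg (aeval x) hg
    rw [map_sub, hf, aeval_C, map_mul, aeval_X, algebraMap_int_eq, eq_intCast] at this
    linear_combination -this
  rw [hc]
  exact neg_mem (Ideal.mul_mem_right _ _ hx)

theorem transcendental_of_mem_jacobson_bot [CharZero R] (h : ¬ Submaximal R) {x : R}
    (hx : x ∈ (⊥ : Ideal R).jacobson) (hreg : x ∈ nonZeroDivisors R) : Transcendental ℤ x := by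
  refine transcendental_iff.mpr fun F hF => by_contra fun hF0 => ?_
  obtain ⟨Q, hFQ, hQ⟩ := exists_eq_pow_rootMultiplicity_mul_and_not_dvd F hF0 0
  rw [map_zero, sub_zero] at hFQ hQ
  refine hQ (X_dvd_iff.mpr (coeff_zero_eq_zero_of_aeval_eq_zero h hx ?_))
  rw [hFQ, map_mul, map_pow, aeval_X] at hF
  exact (mul_left_mem_nonZeroDivisors_eq_zero_iff (pow_mem hreg _)).mp hF

end Jacobson

theorem stmt11_general {R : Type*} [CommRing R] [CharZero R]
    (h : ¬ Submaximal R) :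
    (∀ x ∈ Ideal.jacobson (⊥ : Ideal R), ∀ f : Polynomial ℤ,
        Polynomial.aeval x f = 0 → f.coeff 0 = 0) ∧
      ∀ x ∈ Ideal.jacobson (⊥ : Ideal R), ∃ y : R, y ≠ 0 ∧ x * y = 0 := by
  refine ⟨fun x hx f hf => coeff_zero_eq_zero_of_aeval_eq_zero h hx hf, fun x hx => ?_⟩
  by_contra! hreg
  have hx1 : IsUnit (x + 1) := by simpa using Ideal.mem_jacobson_bot.mp hx 1
  have hxt := transcendental_of_mem_jacobson_bot h hx
    (mem_nonZeroDivisors_iff_left.mpr fun y hy => by_contra fun hy0 => hreg y hy0 hy)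
  refine h (Submaximal.of_transcendental hx1.unit ?_)
  have hxt1 := hxt.aeval (X + C 1) (by rw [natDegree_X_add_C]; exact one_ne_zero)
    (by rw [leadingCoeff_X_add_C]; exact one_mem _)
  rwa [map_add, aeval_X, aeval_C, map_one] at hxt1

theorem stmt11 {R : Type*} [CommRing R] [CharZero R]
    (hJ : Ideal.jacobson (⊥ : Ideal R) ≠ ⊥) (h : ¬ Submaximal R) :
    (∀ x ∈ Ideal.jacobson (⊥ : Ideal R), ∀ f : Polynomial ℤ,
        Polynomial.aeval x f = 0 → f.coeff 0 = 0) ∧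
      ∀ x ∈ Ideal.jacobson (⊥ : Ideal R), ∃ y : R, y ≠ 0 ∧ x * y = 0 :=
  stmt11_general h
end

section
/- Let R ⊆ T be a residually algebraic extension of commutative rings (for every prime ideal Q of T, T/Q is algebraic over R/(Q ∩ R)) and suppose R has finite Krull dimension n. Then T has finite Krull dimension and dim(T) ≤ dim(R). -/
/-!
Contraction of primes `PrimeSpectrum T → PrimeSpectrum R` is strictly monotone, so every chain of
primes of `T` contracts to a chain of the same length in `R`. Strictness is incomparability: if
`P₁ < P₂` and `t ∈ P₂ \ P₁`, the image of `t` in the domain `T ⧸ P₁` is algebraic over the image of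
`R`, hence divides a nonzero element of that image; any preimage `b ∈ R` lies in `P₂ \ P₁`.
-/

open Polynomial

theorem Subring.exists_ne_zero_dvd_of_eval_eq_zero {A : Type*} [CommRing A] [IsDomain A]
    (S : Subring A) {y : A} (hy : y ≠ 0) {p : A[X]} (hp : p ≠ 0) (hcoeff : ∀ i, p.coeff i ∈ S)
    (hroot : p.eval y = 0) : ∃ a ∈ S, a ≠ 0 ∧ y ∣ a := by
  obtain ⟨q, hq⟩ := (lifts_iff_coeff_lifts (f := algebraMap S A) p).2
    fun i => ⟨(⟨_, hcoeff i⟩ : S), rfl⟩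
  have halg : IsAlgebraic S y := by
    refine ⟨q, ?_, ?_⟩
    · rintro rfl
      exact hp (by simp [← hq])
    · rw [aeval_def, eval₂_eq_eval_map, ← coe_mapRingHom, hq, hroot]
  obtain ⟨a, ha, hdvd⟩ := halg.exists_nonzero_dvd (mem_nonZeroDivisors_of_ne_zero hy)
  exact ⟨a, a.2, by simpa using ha, hdvd⟩

theorem Ideal.comap_subtype_lt_comap_subtype {T : Type*} [CommRing T] (R : Subring T)
    {P₁ P₂ : Ideal T} [P₁.IsPrime] (h : P₁ < P₂)
    (hres : ∀ y : T ⧸ P₁, ∃ p : Polynomial (T ⧸ P₁), p ≠ 0 ∧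
      (∀ i, p.coeff i ∈ R.map (Ideal.Quotient.mk P₁)) ∧ p.eval y = 0) :
    P₁.comap R.subtype < P₂.comap R.subtype := by
  obtain ⟨t, htP₂, htP₁⟩ := SetLike.exists_of_lt h
  have hy : Ideal.Quotient.mk P₁ t ≠ 0 := by rwa [ne_eq, Ideal.Quotient.eq_zero_iff_mem]
  obtain ⟨p, hp, hcoeff, hroot⟩ := hres (Ideal.Quotient.mk P₁ t)
  obtain ⟨_, ⟨b, hbR, rfl⟩, hb, c, hbc⟩ :=
    Subring.exists_ne_zero_dvd_of_eval_eq_zero _ hy hp hcoeff hroot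
  obtain ⟨s, rfl⟩ := Ideal.Quotient.mk_surjective c
  have hbts : b - t * s ∈ P₁ := by
    rw [← Ideal.Quotient.eq_zero_iff_mem, map_sub, map_mul, hbc, sub_self]
  have hbP₂ : b ∈ P₂ := by
    simpa using P₂.add_mem (h.le hbts) (P₂.mul_mem_right s htP₂)
  refine SetLike.lt_iff_le_and_exists.mpr ⟨Ideal.comap_mono h.le, ⟨b, hbR⟩, hbP₂, ?_⟩
  rwa [ne_eq, Ideal.Quotient.eq_zero_iff_mem] at hb

theorem stmt19_general {T : Type*} [CommRing T] (R : Subring T)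
    (hres : ∀ Q : Ideal T, Q.IsPrime → ∀ y : T ⧸ Q,
      ∃ p : Polynomial (T ⧸ Q), p ≠ 0 ∧
        (∀ i, p.coeff i ∈ R.map (Ideal.Quotient.mk Q)) ∧ p.eval y = 0) :
    ringKrullDim T ≤ ringKrullDim R :=
  Order.krullDim_le_of_strictMono (PrimeSpectrum.comap R.subtype) fun P₁ _ h =>
    Ideal.comap_subtype_lt_comap_subtype R h (hres _ P₁.isPrime)

theorem stmt19 {T : Type*} [CommRing T] (R : Subring T) (n : ℕ)
    (hdim : ringKrullDim R = n)
    (hres : ∀ Q : Ideal T, Q.IsPrime → ∀ y : T ⧸ Q,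
      ∃ p : Polynomial (T ⧸ Q), p ≠ 0 ∧
        (∀ i, p.coeff i ∈ R.map (Ideal.Quotient.mk Q)) ∧ p.eval y = 0) :
    ringKrullDim T ≤ ringKrullDim R :=
  stmt19_general R hres
end
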